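/- arXiv:2108.08679 — 10 statements merged into one kernel-verified Lean document; each statement's English description precedes it below -/
import Mathlib

section
/- For every integer r ≥ 2 and every positive integer m, there exists a subset D ⊆ {1, 2, ..., m} of size at least m / e^{5√(log m · log r)} such that for any d_0, d_1, ..., d_r ∈ D, the equation d_0 + d_1 + ... + d_{r-1} = r·d_r holds only if d_0 = d_1 = ... = d_r. -/
/-!
Behrend's construction. Points of `{0, …, L-1}^n` on a fixed sphere `∑ xⱼ² = k` are read as
base-`rL` numbers. Since `r` digits below `L` sum to less than `rL`, the equation
`d₀ + ⋯ + d_{r-1} = r d_r` for such numbers has no carries and holds digitwise, i.e. for the vectors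
themselves; on a sphere of a Euclidean space the mean of `r` points lies on the sphere only when all
the points coincide. By pigeonhole some sphere carries a `1/(n L²)` proportion of the box, and
taking `n ≈ √(log m / log r)` and `L ≈ m^{1/n} / r` gives the bound. When
`log m ≤ 25 log r` the bound is at most `1` and a singleton suffices.
-/

open Finset Real

theorem eq_of_sum_eq_card_smul_of_norm_eq {ι E : Type*} [NormedAddCommGroup E]
    [InnerProductSpace ℝ E] {s : Finset ι} {x : ι → E} {y : E} (hx : ∀ i ∈ s, ‖x i‖ = ‖y‖)
    (hsum : ∑ i ∈ s, x i = #s • y) : ∀ i ∈ s, x i = y := by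
  have hdist : ∑ i ∈ s, ‖x i - y‖ ^ 2 = 0 := by
    calc ∑ i ∈ s, ‖x i - y‖ ^ 2 = ∑ i ∈ s, (2 * ‖y‖ ^ 2 - 2 * inner ℝ (x i) y) :=
          sum_congr rfl fun i hi => by rw [norm_sub_sq_real, hx i hi]; ring
      _ = 2 * (#s * ‖y‖ ^ 2 - inner ℝ (∑ i ∈ s, x i) y) := by
          rw [sum_sub_distrib, sum_const, ← mul_sum, ← sum_inner, nsmul_eq_mul]; ring
      _ = 0 := by
          rw [hsum, inner_smul_left_eq_smul, real_inner_self_eq_norm_sq, nsmul_eq_mul]; ring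
  intro i hi
  have := (sum_eq_zero_iff_of_nonneg fun i _ => sq_nonneg ‖x i - y‖).1 hdist i hi
  simpa [sub_eq_zero] using this

def MeanEquationFree (r : ℕ) (D : Finset ℕ) : Prop :=
  ∀ d : ℕ → ℕ, (∀ i ≤ r, d i ∈ D) →
    (∑ i ∈ range r, d i) = r * d r → ∀ i ≤ r, ∀ j ≤ r, d i = d j

namespace MeanEquationFree

theorem singleton (r a : ℕ) : MeanEquationFree r {a} := fun _ hd _ i hi j hj => by
  rw [mem_singleton.1 (hd i hi), mem_singleton.1 (hd j hj)]

theorem of_image {α : Type*} {r : ℕ} {A : Finset α} {f : α → ℕ}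
    (h : ∀ x : ℕ → α, (∀ i ≤ r, x i ∈ A) →
      (∑ i ∈ range r, f (x i)) = r * f (x r) → ∀ i ≤ r, x i = x r) :
    MeanEquationFree r (A.image f) := by
  intro d hd hsum
  have hpre : ∀ i, ∃ a ∈ A, f a = d (min i r) := fun i => mem_image.1 (hd _ (min_le_right i r))
  choose x hxA hfx using hpre
  have hdx : ∀ i ≤ r, d i = f (x i) := fun i hi => by rw [hfx, min_eq_left hi]
  have hxr := h x (fun i _ => hxA i) (by
    rw [← hdx r le_rfl, ← hsum]; exact sum_congr rfl fun i hi => (hdx i (mem_range.1 hi).le).symm)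
  intro i hi j hj
  rw [hdx i hi, hdx j hj, hxr i hi, hxr j hj]

theorem image_add_right {r : ℕ} {D : Finset ℕ} (h : MeanEquationFree r D) (c : ℕ) :
    MeanEquationFree r (D.image (· + c)) :=
  of_image fun x hx hsum i hi =>
    h x hx (by simpa [sum_add_distrib, mul_add] using hsum) i hi r le_rfl

end MeanEquationFree

namespace Behrend

theorem lt_of_mem_sphere {n d k : ℕ} {x : Fin n → ℕ} (hx : x ∈ sphere n d k) (j : Fin n) :
    x j < d :=
  mem_box.1 (sphere_subset_box hx) j

theorem map_lt_pow {n d : ℕ} {x : Fin n → ℕ} (hx : ∀ i, x i < d) : map d x < d ^ n := by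
  induction n with
  | zero => simp
  | succ n ih =>
    have hrest : map d (x ∘ Fin.succ) + 1 ≤ d ^ n := ih fun i => hx i.succ
    calc map d x = x 0 + map d (x ∘ Fin.succ) * d := map_succ' x
      _ < (map d (x ∘ Fin.succ) + 1) * d := by nlinarith [hx 0]
      _ ≤ d ^ (n + 1) := by rw [pow_succ]; exact Nat.mul_le_mul_right d hrest

theorem sum_eq_card_smul_of_map_sum_eq {ι : Type*} {n L : ℕ} {s : Finset ι} (hs : s.Nonempty)
    {x : ι → Fin n → ℕ} {y : Fin n → ℕ} (hx : ∀ i ∈ s, ∀ j, x i j < L) (hy : ∀ j, y j < L)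
    (hsum : ∑ i ∈ s, map (#s * L) (x i) = #s * map (#s * L) y) :
    ∑ i ∈ s, x i = #s • y := by
  refine map_injOn (d := #s * L) (fun j => ?_) (fun j => ?_) ?_
  · rw [Finset.sum_apply]
    calc ∑ i ∈ s, x i j < ∑ i ∈ s, L := sum_lt_sum_of_nonempty hs fun i hi => hx i hi j
      _ = #s * L := by rw [sum_const, smul_eq_mul]
  · exact Nat.mul_lt_mul_of_pos_left (hy j) hs.card_pos
  · rwa [map_sum, map_nsmul, smul_eq_mul]

theorem eq_of_mem_sphere_of_map_sum_eq {ι : Type*} {n L k : ℕ} {s : Finset ι} (hs : s.Nonempty)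
    {x : ι → Fin n → ℕ} {y : Fin n → ℕ} (hx : ∀ i ∈ s, x i ∈ sphere n L k)
    (hy : y ∈ sphere n L k) (hsum : ∑ i ∈ s, map (#s * L) (x i) = #s * map (#s * L) y) :
    ∀ i ∈ s, x i = y := by
  have hvec := sum_eq_card_smul_of_map_sum_eq hs (fun i hi => lt_of_mem_sphere (hx i hi))
    (lt_of_mem_sphere hy) hsum
  let f : (Fin n → ℕ) →+ EuclideanSpace ℝ (Fin n) :=
    { toFun := fun z => WithLp.toLp 2 (((↑) : ℕ → ℝ) ∘ z)
      map_zero' := PiLp.ext fun _ => Nat.cast_zero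
      map_add' := fun _ _ => PiLp.ext fun _ => Nat.cast_add _ _ }
  have hf : Function.Injective f := (WithLp.toLp_injective 2).comp Nat.cast_injective.comp_left
  intro i hi
  refine hf (eq_of_sum_eq_card_smul_of_norm_eq (x := f ∘ x) (fun i hi => ?_) ?_ i hi)
  · exact (norm_of_mem_sphere (hx i hi)).trans (norm_of_mem_sphere hy).symm
  · simp only [Function.comp_apply, ← map_sum, hvec, map_nsmul]

variable {r : ℕ} (n L k : ℕ)

theorem meanEquationFree_image_sphere (hr : 0 < r) :
    MeanEquationFree r ((sphere n L k).image (map (r * L))) :=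
  MeanEquationFree.of_image fun x hx hsum i hi => by
    obtain rfl | hir := eq_or_lt_of_le hi
    · rfl
    refine eq_of_mem_sphere_of_map_sum_eq (s := range r) (nonempty_range_iff.2 hr.ne')
      (fun i hi => hx i (mem_range.1 hi).le) (hx r le_rfl) ?_ i (mem_range.2 hir)
    rwa [card_range]

theorem card_image_map_sphere (hr : 0 < r) :
    #((sphere n L k).image (map (r * L))) = #(sphere n L k) :=
  card_image_of_injOn <| map_injOn.mono fun _ hx j =>
    (lt_of_mem_sphere hx j).trans_le (Nat.le_mul_of_pos_left L hr)

theorem image_map_sphere_subset (hr : 0 < r) :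
    (sphere n L k).image (map (r * L)) ⊆ range ((r * L) ^ n) := by
  intro y hy
  obtain ⟨x, hx, rfl⟩ := mem_image.1 hy
  exact mem_range.2 <| map_lt_pow fun j =>
    (lt_of_mem_sphere hx j).trans_le (Nat.le_mul_of_pos_left L hr)

end Behrend

theorem Nat.le_pow_sub_one {r n : ℕ} (hr : 2 ≤ r) (hn : 1 ≤ n) : n ≤ r ^ (n - 1) :=
  calc n ≤ 2 ^ (n - 1) := by have := Nat.lt_two_pow_self (n := n - 1); omega
    _ ≤ r ^ (n - 1) := Nat.pow_le_pow_left hr _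

theorem exists_sphere_params_of_root {r n : ℕ} {A t : ℝ} (hr : 2 ≤ r) (hn : 1 ≤ n) (hA : 2 * r ≤ A)
    (hnt : ((n : ℝ) - 1) * log r ≤ t) (hAt : log A ≤ t) :
    ∃ L : ℕ, (((r * L) ^ n : ℕ) : ℝ) ≤ A ^ n ∧
      A ^ n / exp (5 * t) ≤ ((L ^ n : ℕ) : ℝ) / ((n * L ^ 2 : ℕ) : ℝ) := by
  obtain ⟨n, rfl⟩ : ∃ n', n = n' + 1 := ⟨n - 1, by omega⟩
  have hr0 : (0 : ℝ) < r := by positivity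
  have hA0 : 0 < A := by linarith
  have hAr : 2 ≤ A / r := (le_div_iff₀ hr0).2 hA
  set L := ⌊A / r⌋₊
  have hL0 : 0 < L := Nat.floor_pos.2 (by linarith)
  have hLA : r * (L : ℝ) ≤ A := by
    have := Nat.floor_le (a := A / r) (by positivity); rw [le_div_iff₀ hr0] at this; linarith
  have hAL : A ≤ r ^ 2 * L := by
    have := Nat.div_two_lt_floor (a := A / r) (by linarith)
    rw [div_div, div_lt_iff₀ (by positivity)] at this
    nlinarith [show (2 : ℝ) ≤ r by exact_mod_cast hr]
  have hnr : (n + 1 : ℝ) ≤ r ^ n := by exact_mod_cast Nat.le_pow_sub_one hr (Nat.le_add_left 1 n)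
  have hexp : (r : ℝ) ^ (3 * n) * A ^ 2 ≤ exp (5 * t) := by
    rw [← log_le_iff_le_exp (by positivity), log_mul (by positivity) (by positivity), log_pow,
      log_pow]
    push_cast at hnt ⊢
    linarith
  refine ⟨L, by push_cast; exact pow_le_pow_left₀ (by positivity) hLA _, ?_⟩
  rw [div_le_div_iff₀ (by positivity) (by positivity)]
  push_cast
  calc A ^ (n + 1) * ((n + 1) * L ^ 2) ≤ (r ^ 2 * L) ^ (n + 1) * (r ^ n * (A / r) ^ 2) := by
        gcongr
        rw [le_div_iff₀ hr0]; linarith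
    _ = L ^ (n + 1) * (r ^ (3 * n) * A ^ 2) := by field_simp; ring
    _ ≤ L ^ (n + 1) * exp (5 * t) := by gcongr

theorem exists_sphere_params {r m : ℕ} (hr : 2 ≤ r) (hm : 1 ≤ m)
    (hlarge : 25 * log r < log m) :
    ∃ n L : ℕ, (r * L) ^ n ≤ m ∧
      (m : ℝ) / exp (5 * √(log m * log r)) ≤ ((L ^ n : ℕ) : ℝ) / ((n * L ^ 2 : ℕ) : ℝ) := by
  have hlr : 0 < log r := log_pos (by exact_mod_cast hr)
  have hm0 : (0 : ℝ) < m := by exact_mod_cast hm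
  set s := √(log m / log r)
  have hs2 : s ^ 2 = log m / log r := sq_sqrt (by positivity)
  have hs5 : 5 < s := lt_sqrt_of_sq_lt (by rw [lt_div_iff₀ hlr]; linarith)
  have hlm : log m = s ^ 2 * log r := by rw [hs2, div_mul_cancel₀ _ hlr.ne']
  have ht : √(log m * log r) = s * log r := by
    rw [hlm, show s ^ 2 * log r * log r = (s * log r) ^ 2 by ring, sqrt_sq (by positivity)]
  set n := ⌈s⌉₊
  have hsn : s ≤ n := Nat.le_ceil s
  have hns : (n : ℝ) < s + 1 := Nat.ceil_lt_add_one (by positivity)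
  have hn0 : (0 : ℝ) < n := by linarith
  set A := (m : ℝ) ^ (n : ℝ)⁻¹
  have hAn : A ^ n = m := rpow_inv_natCast_pow hm0.le (by positivity)
  have hlogA : log A = log m / n := by rw [log_rpow hm0, inv_mul_eq_div]
  have hA : 2 * r ≤ A := by
    rw [← log_le_log_iff (by positivity) (by positivity), hlogA,
      log_mul two_ne_zero (by positivity), le_div_iff₀ hn0, hlm]
    have hl2 := log_le_log two_pos (show (2 : ℝ) ≤ r by exact_mod_cast hr)
    calc (log 2 + log r) * n ≤ 2 * log r * (s + 1) := by gcongr; linarith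
      _ ≤ s ^ 2 * log r := by nlinarith
  obtain ⟨L, hLm, hbound⟩ := exists_sphere_params_of_root hr (by exact_mod_cast hn0) hA
    (t := s * log r) (by nlinarith) (by rw [hlogA, div_le_iff₀ hn0, hlm]; nlinarith)
  rw [hAn] at hLm hbound
  exact ⟨n, L, by exact_mod_cast hLm, by rwa [ht]⟩

theorem natCast_le_exp_five_sqrt_log_mul_log {r m : ℕ} (hm : 1 ≤ m)
    (hsmall : log m ≤ 25 * log r) : (m : ℝ) ≤ exp (5 * √(log m * log r)) := by
  have hlm : 0 ≤ log (m : ℝ) := log_natCast_nonneg m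
  have hle : log m ≤ 5 * √(log m * log r) := by
    rw [← div_le_iff₀' (by norm_num), le_sqrt (by positivity) (by nlinarith)]
    nlinarith
  calc (m : ℝ) = exp (log m) := (exp_log (by exact_mod_cast hm)).symm
    _ ≤ _ := exp_le_exp.2 hle

/-- Alon's lemma: for every r ≥ 2 and positive integer m there is a subset
`D ⊆ {1,…,m}` of size at least `m / e^{5√(log m log r)}` avoiding nontrivial
solutions of `d₀ + ⋯ + d_{r-1} = r·d_r`. -/
theorem statement0 (r m : ℕ) (hr : 2 ≤ r) (hm : 1 ≤ m) :
    ∃ D : Finset ℕ, D ⊆ Finset.Icc 1 m ∧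
      (m : ℝ) / Real.exp (5 * Real.sqrt (Real.log m * Real.log r)) ≤ D.card ∧
      ∀ d : ℕ → ℕ, (∀ i ≤ r, d i ∈ D) →
        (∑ i ∈ Finset.range r, d i) = r * d r → ∀ i ≤ r, ∀ j ≤ r, d i = d j := by
  rcases le_or_gt (log m) (25 * log r) with hsmall | hlarge
  · refine ⟨{1}, by simpa using hm, ?_, MeanEquationFree.singleton r 1⟩
    rw [card_singleton, Nat.cast_one, div_le_one (exp_pos _)]
    exact natCast_le_exp_five_sqrt_log_mul_log hm hsmall
  · have hr0 : 0 < r := by omega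
    obtain ⟨n, L, hLm, hbound⟩ := exists_sphere_params hr hm hlarge
    obtain ⟨k, hk⟩ := Behrend.exists_large_sphere n L
    refine ⟨((Behrend.sphere n L k).image (Behrend.map (r * L))).image (· + 1), ?_, ?_,
      (Behrend.meanEquationFree_image_sphere n L k hr0).image_add_right 1⟩
    · intro y hy
      obtain ⟨x, hx, rfl⟩ := mem_image.1 hy
      have := mem_range.1 (Behrend.image_map_sphere_subset n L k hr0 hx)
      rw [mem_Icc]
      omega
    · rw [card_image_of_injective _ (add_left_injective 1),
        Behrend.card_image_map_sphere n L k hr0]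
      exact hbound.trans hk
end

section
/- Let r ≥ 2, h a positive integer, and t ≥ 0. Suppose x_0, x_1, ..., x_r are nonnegative integers, each with base-h representation x_i = Σ_{j=0}^t x_{i,j} h^j where 0 ≤ x_{i,j} < h/r for all i, j, and suppose Σ_{j=0}^t x_{i,j}^2 = B for a common constant B and all i. If x_0 + x_1 + ... + x_{r-1} = r·x_r, then x_0 = x_1 = ... = x_r. -/
/-!
Because every digit is below `h / r`, adding `r` of the numbers produces no carries, so
`x₀ + ⋯ + x_{r-1} = r·x_r` holds digit by digit. Reading the digits of `x_i` as a vector `v_i`,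
all the `v_i` have the same squared length `B` and their average is `v_r`; expanding
`∑ i, ‖v_i - v_r‖²` then gives `rB - 2rB + rB = 0`, so all the digit vectors coincide.
-/

open Finset

theorem sum_range_succ_mul_pow (a : ℕ → ℕ) (h n : ℕ) :
    ∑ j ∈ range (n + 1), a j * h ^ j = a 0 + h * ∑ j ∈ range n, a (j + 1) * h ^ j := by
  rw [sum_range_succ', add_comm, mul_sum]
  simp only [pow_succ, pow_zero, mul_one]
  congr 1
  exact sum_congr rfl fun _ _ => by ring

theorem eq_of_sum_mul_pow_eq {h : ℕ} :
    ∀ {n : ℕ} {a b : ℕ → ℕ}, (∀ j < n, a j < h) → (∀ j < n, b j < h) →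
      ∑ j ∈ range n, a j * h ^ j = ∑ j ∈ range n, b j * h ^ j → ∀ j < n, a j = b j
  | 0, _, _, _, _, _, j, hj => absurd hj (Nat.not_lt_zero j)
  | n + 1, a, b, ha, hb, heq, j, hj => by
    rw [sum_range_succ_mul_pow, sum_range_succ_mul_pow] at heq
    have ha0 : a 0 < h := ha 0 n.succ_pos
    have hb0 : b 0 < h := hb 0 n.succ_pos
    have h0 : a 0 = b 0 := by
      simpa [Nat.add_mul_mod_self_left, Nat.mod_eq_of_lt ha0, Nat.mod_eq_of_lt hb0]
        using congrArg (· % h) heq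
    rw [h0, Nat.add_left_cancel_iff] at heq
    have htail := Nat.eq_of_mul_eq_mul_left (pos_of_gt ha0) heq
    cases j with
    | zero => exact h0
    | succ j =>
      exact eq_of_sum_mul_pow_eq (a := fun j => a (j + 1)) (b := fun j => b (j + 1))
        (fun j hj => ha _ (by omega)) (fun j hj => hb _ (by omega)) htail j (by omega)

theorem sum_lt_of_card_mul_lt {ι : Type*} {s : Finset ι} (hs : s.Nonempty) {f : ι → ℕ} {h : ℕ}
    (hf : ∀ i ∈ s, #s * f i < h) : ∑ i ∈ s, f i < h := by
  have hlt : ∑ i ∈ s, #s * f i < ∑ _i ∈ s, h := sum_lt_sum_of_nonempty hs hf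
  rw [← mul_sum, sum_const, smul_eq_mul] at hlt
  exact Nat.lt_of_mul_lt_mul_left hlt

theorem eq_of_sum_eq_card_mul_of_sum_sq_eq {ι κ R : Type*} [CommRing R] [LinearOrder R]
    [IsStrictOrderedRing R] {s : Finset ι} {K : Finset κ} {v : ι → κ → R} {w : κ → R}
    (hsq : ∀ i ∈ s, ∑ k ∈ K, v i k ^ 2 = ∑ k ∈ K, w k ^ 2)
    (hsum : ∀ k ∈ K, ∑ i ∈ s, v i k = #s * w k) :
    ∀ i ∈ s, ∀ k ∈ K, v i k = w k := by
  have hzero : ∑ i ∈ s, ∑ k ∈ K, (v i k - w k) ^ 2 = 0 := by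
    calc ∑ i ∈ s, ∑ k ∈ K, (v i k - w k) ^ 2
        = ∑ i ∈ s, ∑ k ∈ K, v i k ^ 2 - 2 * ∑ k ∈ K, w k * ∑ i ∈ s, v i k
            + #s * ∑ k ∈ K, w k ^ 2 := by
          simp only [sub_sq, sum_add_distrib, sum_sub_distrib, mul_sum, sum_const, nsmul_eq_mul]
          rw [sum_comm (f := fun i k => 2 * v i k * w k)]
          congr 2
          exact sum_congr rfl fun _ _ => sum_congr rfl fun _ _ => by ring
      _ = 0 := by
          have hcross : ∑ k ∈ K, w k * ∑ i ∈ s, v i k = #s * ∑ k ∈ K, w k ^ 2 := by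
            rw [mul_sum]
            exact sum_congr rfl fun k hk => by rw [hsum k hk]; ring
          rw [sum_congr rfl hsq, sum_const, nsmul_eq_mul, hcross]
          ring
  intro i hi k hk
  have hsq_nonneg : ∀ i ∈ s, 0 ≤ ∑ k ∈ K, (v i k - w k) ^ 2 :=
    fun _ _ => sum_nonneg fun _ _ => sq_nonneg _
  have hi0 := (sum_eq_zero_iff_of_nonneg hsq_nonneg).mp hzero i hi
  have hk0 := (sum_eq_zero_iff_of_nonneg fun _ _ => sq_nonneg _).mp hi0 k hk
  exact sub_eq_zero.mp (pow_eq_zero_iff two_ne_zero |>.mp hk0)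

theorem statement1_general (r h t B : ℕ) (hr : 2 ≤ r)
    (x : ℕ → ℕ) (X : ℕ → ℕ → ℕ)
    (hrepr : ∀ i ≤ r, x i = ∑ j ∈ Finset.range (t + 1), X i j * h ^ j)
    (hdig : ∀ i ≤ r, ∀ j ≤ t, r * X i j < h)
    (hB : ∀ i ≤ r, (∑ j ∈ Finset.range (t + 1), (X i j) ^ 2) = B)
    (hsum : (∑ i ∈ Finset.range r, x i) = r * x r) :
    ∀ i ≤ r, x i = x 0 := by
  have hdigits : ∀ j < t + 1, ∑ i ∈ range r, X i j = r * X r j := by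
    refine eq_of_sum_mul_pow_eq (fun j hj => ?_) (fun j hj => hdig r le_rfl j (by omega)) ?_
    · exact sum_lt_of_card_mul_lt (nonempty_range_iff.mpr (by omega)) fun i hi => by
        simpa using hdig i (mem_range.mp hi).le j (by omega)
    · simp only [sum_mul, mul_assoc, ← mul_sum]
      rw [sum_comm, ← hrepr r le_rfl, ← hsum]
      exact sum_congr rfl fun i hi => (hrepr i (mem_range.mp hi).le).symm
  have hX : ∀ i ∈ range r, ∀ j ∈ range (t + 1), (X i j : ℤ) = X r j := by
    refine eq_of_sum_eq_card_mul_of_sum_sq_eq (fun i hi => ?_) (fun j hj => ?_)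
    · exact_mod_cast (hB i (mem_range.mp hi).le).trans (hB r le_rfl).symm
    · rw [card_range]; exact_mod_cast hdigits j (mem_range.mp hj)
  have hxr : ∀ i ≤ r, x i = x r := by
    intro i hi
    rcases hi.lt_or_eq with hi | rfl
    · rw [hrepr i hi.le, hrepr r le_rfl]
      exact sum_congr rfl fun j hj => by rw [Nat.cast_inj.mp (hX i (mem_range.mpr hi) j hj)]
    · rfl
  intro i hi
  rw [hxr i hi, hxr 0 (by omega)]

/-- If `x₀,…,x_r` have base-`h` digits `X i j < h/r` (for `j ≤ t`), all with the same
sum of squares of digits `B`, and `x₀ + ⋯ + x_{r-1} = r·x_r`, then all `x_i` are equal. -/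
theorem statement1 (r h t B : ℕ) (hr : 2 ≤ r) (hh : 1 ≤ h)
    (x : ℕ → ℕ) (X : ℕ → ℕ → ℕ)
    (hrepr : ∀ i ≤ r, x i = ∑ j ∈ Finset.range (t + 1), X i j * h ^ j)
    (hdig : ∀ i ≤ r, ∀ j ≤ t, r * X i j < h)
    (hB : ∀ i ≤ r, (∑ j ∈ Finset.range (t + 1), (X i j) ^ 2) = B)
    (hsum : (∑ i ∈ Finset.range r, x i) = r * x r) :
    ∀ i ≤ r, x i = x 0 :=
  statement1_general r h t B hr x X hrepr hdig hB hsum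
end

section
/- Let N be a positive integer, r ≥ 2, and let 0 < λ < 1/r³, 0 < δ < λ/r, with d = ⌊δN⌋ and l = ⌊λN⌋. Let D ⊆ {1, ..., d} be nonempty. Then the r+1 sets D_i ⊆ Z_N defined by D_i = i·l + D for 0 ≤ i ≤ r−1 and D_r = N − C(r,2)·l − r·D are pairwise disjoint. -/
/-- The sets `Dᵢ = i·l + D` (0 ≤ i ≤ r-1) and `D_r = N - C(r,2)·l - r·D`,
viewed in `ZMod N`, are pairwise disjoint. -/
theorem statement4 (N r : ℕ) (hN : 0 < N) (hr : 2 ≤ r) (lam del : ℝ)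
    (hlam0 : 0 < lam) (hlam1 : lam < 1 / (r : ℝ) ^ 3)
    (hdel0 : 0 < del) (hdel1 : del < lam / r)
    (d l : ℕ) (hd : d = ⌊del * N⌋₊) (hl : l = ⌊lam * N⌋₊)
    (D : Finset ℕ) (hD : D ⊆ Finset.Icc 1 d) (hne : D.Nonempty)
    (Di : ℕ → Finset (ZMod N))
    (hDi : ∀ i < r, Di i = D.image (fun x => ((i * l + x : ℕ) : ZMod N)))
    (hDr : Di r = D.image
      (fun x => (N : ZMod N) - ((r.choose 2 * l : ℕ) : ZMod N) - ((r * x : ℕ) : ZMod N))) :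
    ∀ i ≤ r, ∀ j ≤ r, i ≠ j → Disjoint (Di i) (Di j) := by
  have hr0 : (0:ℝ) < (r:ℝ) := by positivity
  -- d ≥ 1
  have hd1 : 1 ≤ d := by
    obtain ⟨x, hx⟩ := hne
    have := hD hx
    rw [Finset.mem_Icc] at this
    omega
  -- r * d ≤ l
  have hrd : r * d ≤ l := by
    have h1 : (d:ℝ) ≤ del * N := by
      rw [hd]; exact Nat.floor_le (by positivity)
    have h2 : lam * N < (l:ℝ) + 1 := by
      rw [hl]; exact Nat.lt_floor_add_one _
    have h3 : del * r < lam := (lt_div_iff₀ hr0).mp hdel1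
    have h4 : ((r*d : ℕ):ℝ) < ((l+1 : ℕ):ℝ) := by
      push_cast
      nlinarith [show (0:ℝ) < (N:ℝ) by exact_mod_cast hN]
    have : r*d < l+1 := by exact_mod_cast h4
    omega
  -- l * r^3 < N
  have hlr : l * r^3 < N := by
    have h1 : (l:ℝ) ≤ lam * N := by
      rw [hl]; exact Nat.floor_le (by positivity)
    have h2 : lam * (r:ℝ)^3 < 1 := by
      have := (lt_div_iff₀ (by positivity : (0:ℝ) < (r:ℝ)^3)).mp hlam1
      linarith
    have h4 : ((l * r^3 : ℕ):ℝ) < ((N : ℕ):ℝ) := by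
      push_cast
      nlinarith [show (0:ℝ) < (N:ℝ) by exact_mod_cast hN, pow_pos hr0 3]
    exact_mod_cast h4
  have h2d : 2 * d ≤ l := le_trans (Nat.mul_le_mul_right d hr) hrd
  -- master inequality
  obtain ⟨s, rfl⟩ : ∃ s, r = s + 2 := ⟨r - 2, by omega⟩
  have hC' : 2 * ((s+2).choose 2) = (s+2)*(s+1) := by
    rw [Nat.choose_two_right, show s+2-1 = s+1 from rfl]
    have he : Even ((s+2)*(s+1)) := by
      rw [mul_comm]; exact Nat.even_mul_succ_self (s+1)
    exact Nat.mul_div_cancel' he.two_dvd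
  have hB : (s+1)*l + d + (s+2).choose 2 * l + (s+2)*d < N := by
    have e1 : 2 * ((s+2).choose 2 * l) = (s+2)*(s+1)*l := by
      rw [← mul_assoc, hC']
    have e2 : (s^2+5*s+7) * l ≤ (s+2)^3 * l :=
      Nat.mul_le_mul_right l (by nlinarith [sq_nonneg s])
    have hB2 : 2 * ((s+1)*l + d + (s+2).choose 2 * l + (s+2)*d) ≤ (s+2)^3 * l := by
      nlinarith [e1, e2, h2d, hrd]
    have hc : (s+2)^3 * l = l * (s+2)^3 := mul_comm _ _
    omega
  -- two key disjointness facts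
  have key1 : ∀ i < s+2, ∀ j < s+2, i < j → Disjoint (Di i) (Di j) := by
    intro i hi j hj hij
    rw [hDi i hi, hDi j hj, Finset.disjoint_left]
    rintro a ha hb
    simp only [Finset.mem_image] at ha hb
    obtain ⟨x, hx, hxa⟩ := ha
    obtain ⟨y, hy, hya⟩ := hb
    rw [← hya] at hxa
    have hx' := hD hx; have hy' := hD hy
    rw [Finset.mem_Icc] at hx' hy'
    have hil : i*l ≤ (s+1)*l := Nat.mul_le_mul_right l (by omega)
    have hjl : j*l ≤ (s+1)*l := Nat.mul_le_mul_right l (by omega)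
    have hb1 : i*l + x < N := by omega
    have hb2 : j*l + y < N := by omega
    have heq : i*l + x = j*l + y := by
      have := congrArg ZMod.val hxa
      rwa [ZMod.val_natCast_of_lt hb1, ZMod.val_natCast_of_lt hb2] at this
    have hstep : (i+1)*l ≤ j*l := Nat.mul_le_mul_right l (by omega)
    rw [Nat.succ_mul] at hstep
    omega
  have key2 : ∀ i < s+2, Disjoint (Di i) (Di (s+2)) := by
    intro i hi
    rw [hDi i hi, hDr, Finset.disjoint_left]
    rintro a ha hb
    simp only [Finset.mem_image] at ha hb
    obtain ⟨x, hx, hxa⟩ := ha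
    obtain ⟨y, hy, hya⟩ := hb
    rw [← hya] at hxa
    have hx' := hD hx; have hy' := hD hy
    rw [Finset.mem_Icc] at hx' hy'
    have hil : i*l ≤ (s+1)*l := Nat.mul_le_mul_right l (by omega)
    have hry : (s+2)*y ≤ (s+2)*d := Nat.mul_le_mul_left (s+2) hy'.2
    have hsub : (s+2).choose 2 * l + (s+2)*y ≤ N := by omega
    have hrhs : (N : ZMod N) - (((s+2).choose 2 * l : ℕ) : ZMod N) - (((s+2) * y : ℕ) : ZMod N)
        = ((N - ((s+2).choose 2 * l + (s+2)*y) : ℕ) : ZMod N) := by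
      rw [Nat.cast_sub hsub]
      push_cast
      ring
    rw [hrhs] at hxa
    have hb1 : i*l + x < N := by omega
    have hb2 : N - ((s+2).choose 2 * l + (s+2)*y) < N := by
      have : 0 < (s+2)*y := Nat.mul_pos (by omega) (by omega)
      omega
    have heq : i*l + x = N - ((s+2).choose 2 * l + (s+2)*y) := by
      have := congrArg ZMod.val hxa
      rwa [ZMod.val_natCast_of_lt hb1, ZMod.val_natCast_of_lt hb2] at this
    omega
  intro i hi j hj hij
  rcases lt_or_eq_of_le hi with hi' | rfl
  · rcases lt_or_eq_of_le hj with hj' | rfl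
    · rcases lt_or_gt_of_ne hij with h | h
      · exact key1 i hi' j hj' h
      · exact (key1 j hj' i hi' h).symm
    · exact key2 i hi'
  · rcases lt_or_eq_of_le hj with hj' | rfl
    · exact (key2 j hj').symm
    · exact absurd rfl hij
end

section
/- With the construction parameters as above and D satisfying the no-nontrivial-solution property (d_0 + ... + d_{r-1} = r·d_r in D implies all equal), let A = ∪_{i=0}^r D_i and suppose b_0, ..., b_r ∈ A are distinct elements summing to 0 mod N. Then exactly one of the b_i lies in D_r. -/
/-!
Elements of `D_0 ∪ ⋯ ∪ D_{r-1}` are small positive numbers, while an element of `D_r` is `N`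
minus a small deficit `C(r,2)·l + r·x`. Since `r³·l < N`, neither the small elements nor the
deficits of `r + 1` elements can add up to `N`, so `b₀ + ⋯ + b_r ≡ 0 (mod N)` forces the small
elements to add up exactly to the deficits. With no element in `D_r` this sum is positive but
must vanish; with two or more, the deficits are at least `2·C(r,2)·l`, more than `r - 1` small
elements can reach.
-/

open Finset

lemma two_mul_choose_two (n : ℕ) : 2 * n.choose 2 = n * (n - 1) := by
  rw [mul_comm, Nat.choose_two_right, Nat.div_two_mul_two_of_even (Nat.even_mul_pred_self n)]

lemma mul_floor_le_floor {a b x : ℝ} {m : ℕ} (ha : 0 ≤ a) (hx : 0 ≤ x) (h : m * a ≤ b) :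
    m * ⌊a * x⌋₊ ≤ ⌊b * x⌋₊ := by
  apply Nat.le_floor
  push_cast
  calc (m : ℝ) * ⌊a * x⌋₊ ≤ m * (a * x) := by gcongr; exact Nat.floor_le (by positivity)
    _ ≤ b * x := by rw [← mul_assoc]; gcongr

lemma mul_floor_lt {a : ℝ} {m N : ℕ} (ha : 0 ≤ a) (hN : 0 < N) (h : m * a < 1) :
    m * ⌊a * N⌋₊ < N := by
  have hN' : (0 : ℝ) < N := by exact_mod_cast hN
  have : (m : ℝ) * ⌊a * N⌋₊ < N :=
    calc (m : ℝ) * ⌊a * N⌋₊ ≤ m * (a * N) := by gcongr; exact Nat.floor_le (by positivity)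
      _ < N := by rw [← mul_assoc]; exact mul_lt_of_lt_one_left hN' h
  exact_mod_cast this

section Arithmetic

variable {r l d c : ℕ}

lemma succ_mul_shift_le (hr : 2 ≤ r) (hdl : d ≤ l) : (r + 1) * ((r - 1) * l + d) ≤ r ^ 3 * l := by
  obtain ⟨s, rfl⟩ : ∃ s, r = s + 2 := ⟨r - 2, by omega⟩
  rw [show s + 2 - 1 = s + 1 by omega]
  nlinarith [Nat.zero_le (s * s * l), Nat.zero_le (s * l)]

lemma succ_mul_deficit_le (hr : 2 ≤ r) (hc : 2 * c = r * (r - 1)) (hdl : r * d ≤ l) :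
    (r + 1) * (c * l + r * d) ≤ r ^ 3 * l := by
  obtain ⟨s, rfl⟩ : ∃ s, r = s + 2 := ⟨r - 2, by omega⟩
  rw [show s + 2 - 1 = s + 1 by omega] at hc
  nlinarith [Nat.zero_le (s * s * l), Nat.zero_le (s * l), Nat.zero_le (s * s * s * l)]

lemma pred_mul_shift_lt (hr : 1 ≤ r) (hc : 2 * c = r * (r - 1)) (hdl : d ≤ l) :
    (r - 1) * ((r - 1) * l + d) < 2 * (c * l + r) := by
  obtain ⟨s, rfl⟩ : ∃ s, r = s + 1 := ⟨r - 1, by omega⟩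
  rw [Nat.add_sub_cancel] at hc ⊢
  nlinarith [Nat.mul_le_mul_left s hdl]

end Arithmetic

section WrapAround

variable {ι : Type*} [Fintype ι] (P : ι → Prop) [DecidablePred P] {N M S L : ℕ} {b : ι → ℕ}

lemma card_filter_mul_lt {T : ℕ} (Q : ι → Prop) [DecidablePred Q]
    (hT : Fintype.card ι * T < N) : #{i | Q i} * T < N :=
  lt_of_le_of_lt (Nat.mul_le_mul_right _ (card_filter_le _ _)) hT

lemma sum_filter_not_eq_sum_filter_sub_of_dvd (hdvd : N ∣ ∑ i, b i)
    (hle : ∀ i, P i → b i ≤ N) (hS : ∀ i, ¬P i → b i ≤ S) (hL : ∀ i, P i → N - b i ≤ L)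
    (hSN : Fintype.card ι * S < N) (hLN : Fintype.card ι * L < N) :
    ∑ i with ¬P i, b i = ∑ i with P i, (N - b i) := by
  apply Nat.ModEq.eq_of_lt_of_lt
  · apply Nat.ModEq.add_right_cancel' (∑ i with P i, b i)
    rw [add_comm, sum_filter_add_sum_filter_not, ← sum_add_distrib,
      sum_congr rfl fun i hi => Nat.sub_add_cancel (hle i (mem_filter.1 hi).2), sum_const,
      smul_eq_mul]
    exact (Nat.modEq_zero_iff_dvd.2 hdvd).trans (Nat.modEq_zero_iff_dvd.2 (dvd_mul_left _ _)).symm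
  · calc ∑ i with ¬P i, b i ≤ #{i | ¬P i} * S :=
          sum_le_card_nsmul _ _ _ fun i hi => hS i (mem_filter.1 hi).2
      _ < N := card_filter_mul_lt _ hSN
  · calc ∑ i with P i, (N - b i) ≤ #{i | P i} * L :=
          sum_le_card_nsmul _ _ _ fun i hi => hL i (mem_filter.1 hi).2
      _ < N := card_filter_mul_lt _ hLN

lemma existsUnique_of_dvd_sum [Nonempty ι] (hdvd : N ∣ ∑ i, b i)
    (hsmall : ∀ i, ¬P i → 1 ≤ b i ∧ b i ≤ S)
    (hlarge : ∀ i, P i → b i ≤ N ∧ M ≤ N - b i ∧ N - b i ≤ L)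
    (hSN : Fintype.card ι * S < N) (hLN : Fintype.card ι * L < N)
    (hSM : (Fintype.card ι - 2) * S < 2 * M) : ∃! i, P i := by
  have hbal := sum_filter_not_eq_sum_filter_sub_of_dvd P hdvd (fun i hi => (hlarge i hi).1)
    (fun i hi => (hsmall i hi).2) (fun i hi => (hlarge i hi).2.2) hSN hLN
  have hcard : #{i | P i} + #{i | ¬P i} = Fintype.card ι := by
    rw [card_filter_add_card_filter_not, card_univ]
  have hlow : #{i | P i} * M ≤ ∑ i with P i, (N - b i) := by
    simpa using card_nsmul_le_sum _ _ _ fun i hi => (hlarge i (mem_filter.1 hi).2).2.1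
  have hup : ∑ i with ¬P i, b i ≤ #{i | ¬P i} * S := by
    simpa using sum_le_card_nsmul _ _ _ fun i hi => (hsmall i (mem_filter.1 hi).2).2
  rw [Fintype.existsUnique_iff_card_one]
  rcases Nat.lt_trichotomy #{i | P i} 1 with h0 | h1 | h2
  · have hP : #{i | P i} = 0 := by omega
    have : #{i | ¬P i} ≤ ∑ i with ¬P i, b i := by
      simpa using card_nsmul_le_sum _ _ _ fun i hi => (hsmall i (mem_filter.1 hi).2).1
    rw [card_eq_zero.1 hP, sum_empty] at hbal
    have := Fintype.card_pos (α := ι)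
    omega
  · exact h1
  · have : 2 * M ≤ #{i | P i} * M := Nat.mul_le_mul_right _ h2
    have : #{i | ¬P i} * S ≤ (Fintype.card ι - 2) * S := Nat.mul_le_mul_right _ (by omega)
    omega

end WrapAround

section Construction

variable {N r l d c : ℕ} {D : Finset ℕ} {a : ℕ}

lemma bounds_of_mem_biUnion_shift (hD : D ⊆ Icc 1 d)
    (ha : a ∈ (range r).biUnion fun i => D.image fun x => i * l + x) :
    1 ≤ a ∧ a ≤ (r - 1) * l + d := by
  simp only [mem_biUnion, mem_range, mem_image] at ha
  obtain ⟨i, hi, x, hx, rfl⟩ := ha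
  have hx := mem_Icc.1 (hD hx)
  have : i * l ≤ (r - 1) * l := Nat.mul_le_mul_right _ (by omega)
  omega

lemma bounds_of_mem_image_reflect (hD : D ⊆ Icc 1 d) (hN : c * l + r * d ≤ N)
    (ha : a ∈ D.image fun x => N - c * l - r * x) :
    a ≤ N ∧ c * l + r ≤ N - a ∧ N - a ≤ c * l + r * d := by
  obtain ⟨x, hx, rfl⟩ := mem_image.1 ha
  have hx := mem_Icc.1 (hD hx)
  have : r * x ≤ r * d := Nat.mul_le_mul_left _ hx.2
  have : r ≤ r * x := Nat.le_mul_of_pos_right _ hx.1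
  omega

end Construction

theorem statement6_general (N r : ℕ) (hN : 0 < N) (hr : 2 ≤ r) (lam del : ℝ)
    (hlam0 : 0 < lam) (hlam1 : lam < 1 / (r : ℝ) ^ 3)
    (hdel0 : 0 < del) (hdel1 : del < lam / r)
    (d l : ℕ) (hd : d = ⌊del * N⌋₊) (hl : l = ⌊lam * N⌋₊)
    (D : Finset ℕ) (hD : D ⊆ Finset.Icc 1 d)
    (Dr : Finset ℕ) (hDr : Dr = D.image (fun x => N - r.choose 2 * l - r * x))
    (A : Finset ℕ)
    (hA : A = ((Finset.range r).biUnion fun i => D.image fun x => i * l + x) ∪ Dr)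
    (b : Fin (r + 1) → ℕ)
    (hbA : ∀ i, b i ∈ A) (hsum : (∑ i, b i) % N = 0) :
    ∃! i : Fin (r + 1), b i ∈ Dr := by
  have hr0 : (0 : ℝ) < r := by exact_mod_cast (by omega : 0 < r)
  have hc := two_mul_choose_two r
  have hrdl : r * d ≤ l := by
    rw [hd, hl]
    exact mul_floor_le_floor hdel0.le N.cast_nonneg (by rw [lt_div_iff₀ hr0] at hdel1; linarith)
  have hdl : d ≤ l := (Nat.le_mul_of_pos_left d (by omega)).trans hrdl
  have hlN : r ^ 3 * l < N := by
    rw [lt_div_iff₀ (by positivity), mul_comm] at hlam1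
    rw [hl]
    exact mul_floor_lt hlam0.le hN (by simpa using hlam1)
  have hSN := (succ_mul_shift_le hr hdl).trans_lt hlN
  have hLN := (succ_mul_deficit_le hr hc hrdl).trans_lt hlN
  refine existsUnique_of_dvd_sum (fun i => b i ∈ Dr) (Nat.dvd_of_mod_eq_zero hsum)
    (fun i hi => ?_) (fun i hi => ?_) (by simpa using hSN) (by simpa using hLN)
    (by simpa using pred_mul_shift_lt (by omega) hc hdl)
  · have hb := hbA i
    rw [hA, mem_union] at hb
    exact bounds_of_mem_biUnion_shift hD (hb.resolve_right hi)
  · rw [hDr] at hi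
    exact bounds_of_mem_image_reflect hD ((Nat.le_mul_of_pos_left _ (by omega)).trans hLN.le) hi

/-- If `b₀,…,b_r` are distinct elements of `A = ⋃ᵢ Dᵢ` (as integers in `{0,…,N-1}`)
summing to `0 mod N`, and `D` has the no-nontrivial-solution property, then exactly one
of the `bᵢ` lies in `D_r`. -/
theorem statement6 (N r : ℕ) (hN : 0 < N) (hr : 2 ≤ r) (lam del : ℝ)
    (hlam0 : 0 < lam) (hlam1 : lam < 1 / (r : ℝ) ^ 3)
    (hdel0 : 0 < del) (hdel1 : del < lam / r)
    (d l : ℕ) (hd : d = ⌊del * N⌋₊) (hl : l = ⌊lam * N⌋₊)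
    (D : Finset ℕ) (hD : D ⊆ Finset.Icc 1 d)
    (hprop : ∀ f : ℕ → ℕ, (∀ i ≤ r, f i ∈ D) →
      (∑ i ∈ Finset.range r, f i) = r * f r → ∀ i ≤ r, f i = f 0)
    (Dr : Finset ℕ) (hDr : Dr = D.image (fun x => N - r.choose 2 * l - r * x))
    (A : Finset ℕ)
    (hA : A = ((Finset.range r).biUnion fun i => D.image fun x => i * l + x) ∪ Dr)
    (b : Fin (r + 1) → ℕ) (hinj : Function.Injective b)
    (hbA : ∀ i, b i ∈ A) (hsum : (∑ i, b i) % N = 0) :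
    ∃! i : Fin (r + 1), b i ∈ Dr :=
  statement6_general N r hN hr lam del hlam0 hlam1 hdel0 hdel1 d l hd hl D hD Dr hDr A hA b hbA hsum
end

section
/- With the construction parameters as above, if b_0, ..., b_r ∈ A = ∪_{i=0}^r D_i and t := |{i : b_i ∈ D_r}| ≥ 2, then as integers (t−1)N < Σ_{i=0}^r b_i < tN, hence the sum is nonzero modulo N. -/
private lemma statement8_key (N r C l d : ℕ) (lam del : ℝ)
    (hr : 2 ≤ r) (hNR : (0:ℝ) < N)
    (hlam0 : 0 < lam) (hlam1 : lam < 1 / (r : ℝ) ^ 3)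
    (hdel0 : 0 < del) (hdel1 : del < lam / r)
    (hlR : (l:ℝ) ≤ lam * N) (hdR : (d:ℝ) ≤ del * N)
    (h3 : (r + 1) * (C + 1) ≤ r ^ 3) :
    (r + 1) * (C * l + r * d) < N := by
  have hrR : (2:ℝ) ≤ (r:ℝ) := by exact_mod_cast hr
  have hKeyR : ((r:ℝ) + 1) * ((C:ℝ) * l + r * d) < N := by
    have hCnn : (0:ℝ) ≤ (C:ℝ) := Nat.cast_nonneg _
    have hrd : (r:ℝ) * d ≤ lam * N := by
      have h1 : (r:ℝ) * d ≤ r * (del * N) :=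
        mul_le_mul_of_nonneg_left hdR (by positivity)
      have h2 : del * (r:ℝ) ≤ lam := by
        have := (le_div_iff₀ (by linarith : (0:ℝ) < (r:ℝ))).mp hdel1.le
        linarith
      nlinarith [hNR.le]
    have step1 : (C:ℝ) * l + r * d ≤ ((C:ℝ) + 1) * (lam * N) := by
      have h1 : (C:ℝ) * l ≤ C * (lam * N) := mul_le_mul_of_nonneg_left hlR hCnn
      nlinarith
    have step2 : ((r:ℝ) + 1) * ((C:ℝ) * l + r * d) ≤ (((r:ℝ) + 1) * ((C:ℝ) + 1)) * (lam * N) := by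
      have := mul_le_mul_of_nonneg_left step1 (by linarith : (0:ℝ) ≤ (r:ℝ) + 1)
      nlinarith
    have h3R : ((r:ℝ) + 1) * ((C:ℝ) + 1) ≤ (r:ℝ) ^ 3 := by exact_mod_cast h3
    have hlamN : (0:ℝ) ≤ lam * N := by positivity
    have step3 : (((r:ℝ) + 1) * ((C:ℝ) + 1)) * (lam * N) ≤ (r:ℝ) ^ 3 * (lam * N) :=
      mul_le_mul_of_nonneg_right h3R hlamN
    have step4 : (r:ℝ) ^ 3 * (lam * N) < N := by
      have hr3 : (0:ℝ) < (r:ℝ) ^ 3 := by positivity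
      have hl1 : lam * (r:ℝ) ^ 3 < 1 := (lt_div_iff₀ hr3).mp hlam1
      have h := mul_lt_mul_of_pos_right hl1 hNR
      nlinarith [h]
    linarith
  exact_mod_cast hKeyR

private lemma statement8_lower (S A B T x N : ℕ)
    (e1 : A + B = T) (e2 : x + N = T) (hB : B < N) (hS : A ≤ S) : x < S := by omega

private lemma statement8_upper (S A B Cc T : ℕ)
    (hS : S ≤ A + B) (hB : B < Cc) (e : A + Cc = T) : S < T := by omega


/-- If `b₀,…,b_r ∈ A = ⋃ᵢ Dᵢ` and `t := #{i : bᵢ ∈ D_r} ≥ 2`, then (over ℤ, here ℕ)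
`(t-1)N < ∑ bᵢ < tN`, so the sum is nonzero mod `N`. -/
theorem statement8 (N r : ℕ) (hN : 0 < N) (hr : 2 ≤ r) (lam del : ℝ)
    (hlam0 : 0 < lam) (hlam1 : lam < 1 / (r : ℝ) ^ 3)
    (hdel0 : 0 < del) (hdel1 : del < lam / r)
    (d l : ℕ) (hd : d = ⌊del * N⌋₊) (hl : l = ⌊lam * N⌋₊)
    (D : Finset ℕ) (hD : D ⊆ Finset.Icc 1 d)
    (Dr : Finset ℕ) (hDr : Dr = D.image (fun x => N - r.choose 2 * l - r * x))
    (A : Finset ℕ)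
    (hA : A = ((Finset.range r).biUnion fun i => D.image fun x => i * l + x) ∪ Dr)
    (b : Fin (r + 1) → ℕ) (hbA : ∀ i, b i ∈ A)
    (t : ℕ) (ht : t = (Finset.univ.filter fun i => b i ∈ Dr).card) (ht2 : 2 ≤ t) :
    (t - 1) * N < (∑ i, b i) ∧ (∑ i, b i) < t * N ∧ ¬ (N ∣ ∑ i, b i) := by
  have hr0 : 0 < r := by omega
  have hrR : (2:ℝ) ≤ (r:ℝ) := by exact_mod_cast hr
  have hNR : (0:ℝ) < (N:ℝ) := by exact_mod_cast hN
  have hlR : (l:ℝ) ≤ lam * N := by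
    rw [hl]; exact Nat.floor_le (by positivity)
  have hdR : (d:ℝ) ≤ del * N := by
    rw [hd]; exact Nat.floor_le (by positivity)
  set C := r.choose 2 with hCdef
  clear_value C
  -- 2*C = r*(r-1)
  have hCr : 2 * C = r * (r - 1) := by
    have hev : Even (r * (r - 1)) := by
      have h := Nat.even_mul_succ_self (r - 1)
      have h1 : r - 1 + 1 = r := by omega
      rw [h1] at h
      rwa [mul_comm]
    rw [hCdef, Nat.choose_two_right]
    exact Nat.mul_div_cancel' hev.two_dvd
  -- (r+1)*(C+1) ≤ r^3
  have h3 : (r + 1) * (C + 1) ≤ r ^ 3 := by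
    obtain ⟨s, rfl⟩ : ∃ s, r = s + 2 := ⟨r - 2, by omega⟩
    have hs : s + 2 - 1 = s + 1 := by omega
    rw [hs] at hCr
    nlinarith [hCr, sq_nonneg s, s.zero_le]
  have hKey : (r + 1) * (C * l + r * d) < N :=
    statement8_key N r C l d lam del hr hNR hlam0 hlam1 hdel0 hdel1 hlR hdR h3
  -- d ≥ 1
  obtain ⟨i0, hi0⟩ : ∃ i, b i ∈ Dr := by
    have hne : (Finset.univ.filter fun i => b i ∈ Dr).Nonempty := by
      rw [← Finset.card_pos]; omega
    obtain ⟨i, hi⟩ := hne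
    exact ⟨i, (Finset.mem_filter.mp hi).2⟩
  obtain ⟨x0, hx0D, _⟩ := Finset.mem_image.mp (hDr ▸ hi0)
  have hx0 := Finset.mem_Icc.mp (hD hx0D)
  have hd1 : 1 ≤ d := le_trans hx0.1 hx0.2
  -- d ≤ l
  have hdl : d ≤ l := by
    rw [hd, hl]
    apply Nat.floor_le_floor
    have h1 : del ≤ lam := le_trans hdel1.le (div_le_self hlam0.le (by linarith))
    nlinarith [hNR.le]
  set K := C * l with hKdef
  clear_value K
  -- per-element bounds for Dr elements
  have hDrBound : ∀ i : Fin (r + 1), b i ∈ Dr →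
      N - K - r * d ≤ b i ∧ b i ≤ N - K - r := by
    intro i hi
    obtain ⟨x, hxD, hxe⟩ := Finset.mem_image.mp (hDr ▸ hi)
    have hx := Finset.mem_Icc.mp (hD hxD)
    have h1 : r * x ≤ r * d := Nat.mul_le_mul_left r hx.2
    have h2 : r ≤ r * x := by
      calc r = r * 1 := (mul_one r).symm
        _ ≤ r * x := Nat.mul_le_mul_left r hx.1
    constructor
    · calc N - K - r * d ≤ N - K - r * x := Nat.sub_le_sub_left h1 _
        _ = b i := hxe
    · calc b i = N - K - r * x := hxe.symm
        _ ≤ N - K - r := Nat.sub_le_sub_left h2 _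
  -- per-element bound for non-Dr elements
  have hNotBound : ∀ i : Fin (r + 1), b i ∉ Dr → b i ≤ (r - 1) * l + d := by
    intro i hi
    have hb := hbA i
    rw [hA, Finset.mem_union] at hb
    rcases hb with h | h
    · obtain ⟨j, hj, hx⟩ := Finset.mem_biUnion.mp h
      obtain ⟨x, hxD, hxe⟩ := Finset.mem_image.mp hx
      have hj' : j ≤ r - 1 := by have := Finset.mem_range.mp hj; omega
      have hxd : x ≤ d := (Finset.mem_Icc.mp (hD hxD)).2
      calc b i = j * l + x := hxe.symm
        _ ≤ (r - 1) * l + d := add_le_add (Nat.mul_le_mul_right l hj') hxd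
    · exact absurd h hi
  -- nontruncation facts
  have hKrd : K + r * d < N :=
    lt_of_le_of_lt (Nat.le_mul_of_pos_left _ (by omega)) hKey
  have hrd1 : r ≤ r * d := Nat.le_mul_of_pos_right r (by omega)
  have hKr : K + r ≤ N := le_trans (Nat.add_le_add_left hrd1 K) hKrd.le
  set Lo := N - K - r * d with hLodef
  clear_value Lo
  set Hi := N - K - r with hHidef
  clear_value Hi
  have hLo : Lo + (K + r * d) = N := by
    rw [hLodef, Nat.sub_sub]; exact Nat.sub_add_cancel hKrd.le
  have hHi : Hi + (K + r) = N := by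
    rw [hHidef, Nat.sub_sub]; exact Nat.sub_add_cancel hKr
  -- cardinalities
  have htr : t ≤ r + 1 := by
    rw [ht]
    exact le_trans (Finset.card_filter_le _ _) (by simp)
  have hcardc : (Finset.univ.filter fun i : Fin (r+1) => ¬ (b i ∈ Dr)).card = (r + 1) - t := by
    have := Finset.card_filter_add_card_filter_not
      (s := (Finset.univ : Finset (Fin (r+1)))) (p := fun i => b i ∈ Dr)
    simp only [Finset.card_univ, Fintype.card_fin] at this
    omega
  -- sum splitting and bounds
  have F3 : ∑ i, b i =
      (∑ i ∈ Finset.univ.filter (fun i => b i ∈ Dr), b i)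
      + ∑ i ∈ Finset.univ.filter (fun i => ¬ (b i ∈ Dr)), b i :=
    (Finset.sum_filter_add_sum_filter_not _ _ _).symm
  have F1a : t * Lo ≤ ∑ i ∈ Finset.univ.filter (fun i => b i ∈ Dr), b i := by
    have h := Finset.card_nsmul_le_sum (Finset.univ.filter (fun i => b i ∈ Dr)) b Lo
      (fun i hi => (hDrBound i (Finset.mem_filter.mp hi).2).1)
    rw [ht]
    simpa [nsmul_eq_mul] using h
  have F1b : (∑ i ∈ Finset.univ.filter (fun i => b i ∈ Dr), b i) ≤ t * Hi := by
    have h := Finset.sum_le_card_nsmul (Finset.univ.filter (fun i => b i ∈ Dr)) b Hi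
      (fun i hi => (hDrBound i (Finset.mem_filter.mp hi).2).2)
    rw [ht]
    simpa [nsmul_eq_mul] using h
  have F2 : (∑ i ∈ Finset.univ.filter (fun i => ¬ (b i ∈ Dr)), b i)
      ≤ ((r + 1) - t) * ((r - 1) * l + d) := by
    have h := Finset.sum_le_card_nsmul (Finset.univ.filter (fun i => ¬ (b i ∈ Dr))) b
      ((r - 1) * l + d) (fun i hi => hNotBound i (Finset.mem_filter.mp hi).2)
    rw [← hcardc]
    simpa [nsmul_eq_mul] using h
  -- final arithmetic
  have htK : t * (K + r * d) < N :=
    lt_of_le_of_lt (Nat.mul_le_mul htr (le_refl _)) hKey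
  have e1 : t * Lo + t * (K + r * d) = t * N := by rw [← Nat.mul_add, hLo]
  have e2 : (t - 1) * N + N = t * N := by
    have h : t - 1 + 1 = t := by omega
    calc (t - 1) * N + N = (t - 1 + 1) * N := by ring
      _ = t * N := by rw [h]
  have goal1 : (t - 1) * N < ∑ i, b i := by
    have hS : t * Lo ≤ ∑ i, b i := by
      rw [F3]; exact le_trans F1a (Nat.le_add_right _ _)
    exact statement8_lower _ _ _ _ _ N e1 e2 htK hS
  have hMt : ((r + 1) - t) * ((r - 1) * l + d) < t * (K + r) := by
    have h1 : ((r + 1) - t) * ((r - 1) * l + d) ≤ (r - 1) * ((r - 1) * l + d) :=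
      Nat.mul_le_mul_right _ (by omega)
    have h2 : (r - 1) * ((r - 1) * l + d) ≤ (r - 1) * ((r - 1) * l + l) :=
      Nat.mul_le_mul_left _ (Nat.add_le_add_left hdl _)
    have h3 : (r - 1) * ((r - 1) * l + l) = 2 * K := by
      have hrr : (r - 1) * ((r - 1) * l + l) = ((r - 1) * ((r - 1) + 1)) * l := by ring
      have hr1 : r - 1 + 1 = r := by omega
      rw [hKdef, hrr, hr1, mul_comm (r - 1) r, ← hCr]
      ring
    have h4 : 2 * K ≤ t * K := Nat.mul_le_mul_right K ht2
    have h5 : t * K < t * (K + r) := by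
      have hpos : 0 < t * r := Nat.mul_pos (by omega) hr0
      calc t * K < t * K + t * r := by omega
        _ = t * (K + r) := by ring
    exact lt_of_le_of_lt (le_trans h1 (le_trans h2 (h3 ▸ h4))) h5
  have e3 : t * Hi + t * (K + r) = t * N := by rw [← Nat.mul_add, hHi]
  have goal2 : (∑ i, b i) < t * N := by
    have hS : (∑ i, b i) ≤ t * Hi + ((r + 1) - t) * ((r - 1) * l + d) := by
      rw [F3]; exact add_le_add F1b F2
    exact statement8_upper _ _ _ _ _ hS hMt e3
  refine ⟨goal1, goal2, ?_⟩
  rintro ⟨m, hm⟩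
  rw [hm] at goal1 goal2
  have h1 : t - 1 < m := by
    have := goal1
    rw [mul_comm N m] at this
    exact lt_of_mul_lt_mul_right this (Nat.zero_le _)
  have h2 : m < t := by
    have := goal2
    rw [mul_comm N m] at this
    exact lt_of_mul_lt_mul_right this (Nat.zero_le _)
  omega
end

section
/- With the construction parameters as above (r ≥ 2, 0 < λ < 1/r³, 0 < δ < λ/r, d = ⌊δN⌋, l = ⌊λN⌋, D ⊆ {1,...,d}), suppose b_0, ..., b_{r-1} are elements with b_i ∈ D_{c_i} for indices c_i ∈ {0,...,r−1} (with multiplicities t_j = |{i : c_i = j}|), and suppose Σ_{i=0}^{r-1} b_i = C(r,2)·l + r·z for some z ∈ D. Then Σ_{j=0}^{r-1} j·t_j = C(r,2). -/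
/-!
Write `bᵢ = cᵢ·l + xᵢ` with `xᵢ ∈ [1, d]`. Summing gives `(∑ cᵢ)·l + ∑ xᵢ = C(r,2)·l + r·z`, and after
removing `r` from both sides the remainders `∑ (xᵢ - 1)` and `r·(z - 1)` are both below `r·d ≤ l`
(this is where `δ < λ/r` enters). Uniqueness of quotients modulo `l` then forces `∑ cᵢ = C(r,2)`,
and `∑ cᵢ` is `∑ⱼ j·tⱼ` regrouped by the value of `cᵢ`.
-/

open Finset

theorem Nat.eq_of_mul_add_eq_mul_add {A C l S T : ℕ} (hS : S < l) (hT : T < l)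
    (h : A * l + S = C * l + T) : A = C := by
  have hl : 0 < l := by omega
  have quotient (Q R : ℕ) (hR : R < l) : (Q * l + R) / l = Q := by
    rw [add_comm, Nat.add_mul_div_right _ _ hl, Nat.div_eq_of_lt hR, zero_add]
  rw [← quotient A S hS, h, quotient C T hT]

theorem Nat.mul_floor_le_floor {α : Type*} [Semiring α] [LinearOrder α] [IsStrictOrderedRing α]
    [FloorSemiring α] {n : ℕ} {a b : α} (ha : 0 ≤ a) (h : n * a ≤ b) : n * ⌊a⌋₊ ≤ ⌊b⌋₊ :=
  Nat.le_floor <| by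
    push_cast
    exact (mul_le_mul_of_nonneg_left (Nat.floor_le ha) n.cast_nonneg).trans h

theorem Finset.sum_mul_card_fiber_eq_sum {ι : Type*} [Fintype ι] {f : ι → ℕ} {s : Finset ℕ}
    (hf : ∀ i, f i ∈ s) : ∑ j ∈ s, j * #{i | f i = j} = ∑ i, f i := by
  rw [← sum_fiberwise_of_maps_to fun i _ => hf i]
  refine sum_congr rfl fun j _ => ?_
  rw [sum_congr rfl fun i hi => (mem_filter.1 hi).2, sum_const, smul_eq_mul, mul_comm]

theorem sum_eq_of_sum_mul_add_eq {ι : Type*} [Fintype ι] [Nonempty ι] {c x : ι → ℕ}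
    {C l d z : ℕ} (hld : Fintype.card ι * d ≤ l) (hx : ∀ i, x i ∈ Icc 1 d) (hz : z ∈ Icc 1 d)
    (h : ∑ i, (c i * l + x i) = C * l + Fintype.card ι * z) : ∑ i, c i = C := by
  have hz' := mem_Icc.1 hz
  have hS : ∑ i, (x i - 1) < l :=
    calc ∑ i, (x i - 1) < ∑ _i : ι, d :=
          sum_lt_sum_of_nonempty univ_nonempty fun i _ => by have := mem_Icc.1 (hx i); omega
      _ = Fintype.card ι * d := by simp
      _ ≤ l := hld
  have hT : Fintype.card ι * (z - 1) < l :=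
    ((Nat.mul_lt_mul_left Fintype.card_pos).2 (by omega)).trans_le hld
  have hxsum : ∑ i, x i = Fintype.card ι + ∑ i, (x i - 1) := by
    rw [← card_univ, card_eq_sum_ones, ← sum_add_distrib]
    exact sum_congr rfl fun i _ => by have := mem_Icc.1 (hx i); omega
  have hzr : Fintype.card ι * z = Fintype.card ι + Fintype.card ι * (z - 1) := by
    rw [Nat.mul_sub_one]
    have := Nat.le_mul_of_pos_right (Fintype.card ι) hz'.1
    omega
  refine Nat.eq_of_mul_add_eq_mul_add hS hT ?_
  rw [sum_add_distrib, ← sum_mul, hxsum, hzr] at h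
  omega

theorem statement9_general (N r : ℕ) (hr : 2 ≤ r) (lam del : ℝ)
    (hdel0 : 0 < del) (hdel1 : del < lam / r)
    (d l : ℕ) (hd : d = ⌊del * N⌋₊) (hl : l = ⌊lam * N⌋₊)
    (D : Finset ℕ) (hD : D ⊆ Finset.Icc 1 d)
    (b c : Fin r → ℕ) (hc : ∀ i, c i < r)
    (hb : ∀ i, ∃ x ∈ D, b i = c i * l + x)
    (z : ℕ) (hz : z ∈ D)
    (hsum : (∑ i, b i) = r.choose 2 * l + r * z) :
    (∑ j ∈ Finset.range r, j * (Finset.univ.filter fun i => c i = j).card) = r.choose 2 := by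
  choose x hxD hbx using hb
  have hr0 : (0 : ℝ) < r := by norm_cast; omega
  have hrdl : r * d ≤ l := by
    rw [hd, hl]
    refine Nat.mul_floor_le_floor (by positivity) ?_
    have : r * del ≤ lam := by rw [lt_div_iff₀ hr0] at hdel1; linarith
    calc (r : ℝ) * (del * N) = r * del * N := by ring
      _ ≤ lam * N := by gcongr
  have : Nonempty (Fin r) := ⟨⟨0, by omega⟩⟩
  have hcoef : ∑ i, c i = r.choose 2 :=
    sum_eq_of_sum_mul_add_eq (x := x) (by simpa using hrdl) (fun i => hD (hxD i)) (hD hz)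
      (by simpa [← hbx] using hsum)
  rw [sum_mul_card_fiber_eq_sum fun i => mem_range.2 (hc i), hcoef]

/-- If `bᵢ ∈ D_{cᵢ}` with `cᵢ ∈ {0,…,r-1}` and `∑ bᵢ = C(r,2)·l + r·z` for some `z ∈ D`,
then `∑ⱼ j·tⱼ = C(r,2)` where `tⱼ = #{i : cᵢ = j}`. -/
theorem statement9 (N r : ℕ) (hN : 0 < N) (hr : 2 ≤ r) (lam del : ℝ)
    (hlam0 : 0 < lam) (hlam1 : lam < 1 / (r : ℝ) ^ 3)
    (hdel0 : 0 < del) (hdel1 : del < lam / r)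
    (d l : ℕ) (hd : d = ⌊del * N⌋₊) (hl : l = ⌊lam * N⌋₊)
    (D : Finset ℕ) (hD : D ⊆ Finset.Icc 1 d)
    (b c : Fin r → ℕ) (hc : ∀ i, c i < r)
    (hb : ∀ i, ∃ x ∈ D, b i = c i * l + x)
    (z : ℕ) (hz : z ∈ D)
    (hsum : (∑ i, b i) = r.choose 2 * l + r * z) :
    (∑ j ∈ Finset.range r, j * (Finset.univ.filter fun i => c i = j).card) = r.choose 2 :=
  statement9_general N r hr lam del hdel0 hdel1 d l hd hl D hD b c hc hb z hz hsum
end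

section
/- Let N ≥ 1, r ≥ 2, 0 < λ < 1/r³, 0 < δ < λ/r, d = ⌊δN⌋, l = ⌊λN⌋, and let D ⊆ {1,...,d} satisfy the property that d_0 + ... + d_{r-1} = r·d_r with d_i ∈ D implies all d_i equal. For b ∈ D define A_b = {i·l + b : 0 ≤ i ≤ r−1} ∪ {N − C(r,2)·l − r·b} ⊆ Z_N, and A = ∪_{b∈D} A_b. Then for any r+1 distinct elements a_1, ..., a_{r+1} of A, Σ a_i ≡ 0 (mod N) if and only if {a_1, ..., a_{r+1}} = A_b for some b ∈ D. -/
/-!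
Each element of `A` has a representative of absolute value at most `(C(r,2) + 1) l` in `ℤ`:
`c l + b` with `c < r`, or the apex `-(C(r,2) l + r b)`. Since `(r + 1)(C(r,2) + 1) l < N`, a sum
of `r + 1` elements vanishes mod `N` only if the small representatives balance the apexes
exactly. Comparing sizes (using `r b ≤ l`), no apex makes the sum positive and two apexes
outweigh the at most `r - 1` small elements left, so there is exactly one apex, with parameter
`b`, and `∑ (c_i l + b_i) = C(r,2) l + r b`. Both `∑ b_i` and `r b` lie in `[1, l]`, so reducing
mod `l` gives `∑ b_i = r b`; the hypothesis on `D` forces every `b_i = b`, and the `r` distinct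
small elements then exhaust `{c l + b : c < r}`.
-/

open Finset

lemma two_mul_choose_two_s11 (r : ℕ) : 2 * r.choose 2 = r * (r - 1) := by
  rw [Nat.choose_two_right, Nat.mul_div_cancel' (Nat.even_mul_pred_self r).two_dvd]

lemma le_choose_two_succ {r : ℕ} (hr : 2 ≤ r) : r ≤ r.choose 2 + 1 := by
  have := two_mul_choose_two_s11 r
  obtain ⟨s, rfl⟩ : ∃ s, r = s + 2 := ⟨r - 2, by omega⟩
  rw [show s + 2 - 1 = s + 1 by omega] at this
  nlinarith

lemma succ_mul_choose_two_succ_le {r : ℕ} (hr : 2 ≤ r) : (r + 1) * (r.choose 2 + 1) ≤ r ^ 3 := by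
  have := two_mul_choose_two_s11 r
  obtain ⟨s, rfl⟩ : ∃ s, r = s + 2 := ⟨r - 2, by omega⟩
  rw [show s + 2 - 1 = s + 1 by omega] at this
  nlinarith

lemma Nat.eq_of_mul_add_eq_mul_add_s11 {l m n x y : ℕ} (hx : 0 < x) (hxl : x ≤ l) (hy : 0 < y)
    (hyl : y ≤ l) (h : m * l + x = n * l + y) : x = y := by
  have hmod : x ≡ y [MOD l] := by
    have := congrArg (· % l) h
    simpa [Nat.ModEq, Nat.add_comm (m * l), Nat.add_comm (n * l)] using this
  exact hmod.eq_of_abs_lt (abs_sub_lt_iff.2 ⟨by omega, by omega⟩)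

lemma ZMod.natCast_inj_of_lt {N x y : ℕ} (hx : x < N) (hy : y < N) (h : (x : ZMod N) = y) :
    x = y :=
  ((ZMod.natCast_eq_natCast_iff x y N).1 h).eq_of_lt_of_lt hx hy

lemma Nat.mul_floor_le_floor_s11 {r : ℕ} {x y : ℝ} (h : r * x ≤ y) : r * ⌊x⌋₊ ≤ ⌊y⌋₊ := by
  rcases lt_or_ge x 0 with hx | hx
  · simp [Nat.floor_of_nonpos hx.le]
  · exact Nat.le_floor <| by
      push_cast
      exact (mul_le_mul_of_nonneg_left (Nat.floor_le hx) r.cast_nonneg).trans h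

lemma Nat.mul_floor_mul_lt {n N : ℕ} {x : ℝ} (hN : 0 < N) (h : n * x < 1) :
    n * ⌊x * N⌋₊ < N := by
  rcases lt_or_ge (x * N) 0 with hx | hx
  · simp [Nat.floor_of_nonpos hx.le, hN]
  · have hN' : (0 : ℝ) < N := by exact_mod_cast hN
    have : (n : ℝ) * ⌊x * N⌋₊ < N :=
      calc (n : ℝ) * ⌊x * N⌋₊ ≤ n * (x * N) :=
            mul_le_mul_of_nonneg_left (Nat.floor_le hx) n.cast_nonneg
        _ = n * x * N := by ring
        _ < 1 * N := by gcongr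
        _ = N := one_mul _
    exact_mod_cast this

section

variable {r l b : ℕ}

lemma mul_add_lt_mul {c : ℕ} (hr : 2 ≤ r) (hb : 1 ≤ b) (hrb : r * b ≤ l) (hc : c < r) :
    c * l + b < r * l := by
  nlinarith

lemma mul_add_lt_choose_two_succ_mul {c : ℕ} (hr : 2 ≤ r) (hb : 1 ≤ b) (hrb : r * b ≤ l)
    (hc : c < r) : c * l + b < (r.choose 2 + 1) * l :=
  (mul_add_lt_mul hr hb hrb hc).trans_le (Nat.mul_le_mul_right l (le_choose_two_succ hr))

lemma choose_two_mul_add_le (hrb : r * b ≤ l) :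
    r.choose 2 * l + r * b ≤ (r.choose 2 + 1) * l := by
  rw [add_one_mul]
  omega

end

lemma sum_compl_eq_sum_of_sum_eq_zero {ι : Type*} [Fintype ι] [DecidableEq ι] {N M : ℕ}
    (hM : Fintype.card ι * M < N) {a : ι → ZMod N} {u : ι → ℕ} (hu : ∀ i, u i ≤ M)
    {S : Finset ι} (hS : ∀ i ∈ S, a i = -(u i : ZMod N)) (hSc : ∀ i ∈ Sᶜ, a i = u i)
    (hsum : ∑ i, a i = 0) : ∑ i ∈ Sᶜ, u i = ∑ i ∈ S, u i := by
  have hlt : ∀ T : Finset ι, ∑ i ∈ T, u i < N := fun T =>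
    calc ∑ i ∈ T, u i ≤ #T * M := by simpa using sum_le_card_nsmul T u M fun i _ => hu i
      _ ≤ Fintype.card ι * M := Nat.mul_le_mul_right M (card_le_univ T)
      _ < N := hM
  refine ZMod.natCast_inj_of_lt (hlt _) (hlt _) ?_
  rw [← sum_compl_add_sum S, sum_congr rfl hSc, sum_congr rfl hS, sum_neg_distrib,
    ← sub_eq_add_neg, sub_eq_zero] at hsum
  push_cast
  exact hsum

def transversal (N r l b : ℕ) : Finset (ZMod N) :=
  ((range r).image fun i => ((i * l + b : ℕ) : ZMod N)) ∪
    {(N : ZMod N) - ((r.choose 2 * l : ℕ) : ZMod N) - ((r * b : ℕ) : ZMod N)}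

lemma apex_eq_neg (N r l b : ℕ) :
    (N : ZMod N) - ((r.choose 2 * l : ℕ) : ZMod N) - ((r * b : ℕ) : ZMod N) =
      -((r.choose 2 * l + r * b : ℕ) : ZMod N) := by
  push_cast
  rw [ZMod.natCast_self]
  ring

lemma mem_transversal {N r l b : ℕ} {x : ZMod N} :
    x ∈ transversal N r l b ↔ (∃ c < r, x = ((c * l + b : ℕ) : ZMod N)) ∨
      x = -((r.choose 2 * l + r * b : ℕ) : ZMod N) := by
  simp only [transversal, mem_union, mem_image, mem_range, mem_singleton, apex_eq_neg, eq_comm]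

lemma sum_range_mul_add (r l b : ℕ) :
    ∑ i ∈ range r, (i * l + b) = r.choose 2 * l + r * b := by
  rw [sum_add_distrib, ← sum_mul, sum_range_id, ← Nat.choose_two_right, sum_const, card_range,
    smul_eq_mul]

theorem sum_transversal {N r l b : ℕ} (hr : 2 ≤ r) (hN : (r + 1) * ((r.choose 2 + 1) * l) < N)
    (hb : 1 ≤ b) (hrb : r * b ≤ l) : ∑ x ∈ transversal N r l b, x = 0 := by
  have hl : 0 < l := by nlinarith
  have hsmall : ∀ c < r, c * l + b < N := fun c hc => by
    have := mul_add_lt_choose_two_succ_mul hr hb hrb hc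
    nlinarith
  have hinj : Set.InjOn (fun i => ((i * l + b : ℕ) : ZMod N)) (range r) := by
    intro c hc c' hc' h
    have := ZMod.natCast_inj_of_lt (hsmall c (mem_range.1 hc)) (hsmall c' (mem_range.1 hc')) h
    exact Nat.eq_of_mul_eq_mul_right (by omega) (by omega : c * l = c' * l)
  have happex : (N : ZMod N) - ((r.choose 2 * l : ℕ) : ZMod N) - ((r * b : ℕ) : ZMod N) ∉
      (range r).image fun i => ((i * l + b : ℕ) : ZMod N) := by
    rw [apex_eq_neg, mem_image]
    rintro ⟨c, hc, h⟩
    have hzero : ((c * l + b + (r.choose 2 * l + r * b) : ℕ) : ZMod N) = 0 := by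
      push_cast at h ⊢
      rw [h]
      ring
    rw [ZMod.natCast_eq_zero_iff] at hzero
    refine (Nat.eq_zero_of_dvd_of_lt hzero ?_).not_gt (by omega)
    have := mul_add_lt_choose_two_succ_mul hr hb hrb (mem_range.1 hc)
    have := choose_two_mul_add_le hrb
    nlinarith
  rw [transversal, sum_union (disjoint_singleton_right.2 happex), sum_image hinj, sum_singleton,
    apex_eq_neg, ← Nat.cast_sum, sum_range_mul_add, add_neg_cancel]

section

variable {ι : Type*} {r l : ℕ}

theorem card_eq_one_of_sum_compl_eq_sum [Fintype ι] [DecidableEq ι] (hr : 2 ≤ r)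
    (hι : Fintype.card ι = r + 1) {S : Finset ι} {b c : ι → ℕ}
    (hb : ∀ i, 1 ≤ b i ∧ r * b i ≤ l) (hc : ∀ i ∈ Sᶜ, c i < r)
    (h : ∑ i ∈ Sᶜ, (c i * l + b i) = ∑ i ∈ S, (r.choose 2 * l + r * b i)) : #S = 1 := by
  have hcard : #S + #Sᶜ = r + 1 := by rw [card_add_card_compl, hι]
  have hsmall_ge : #Sᶜ ≤ ∑ i ∈ Sᶜ, (c i * l + b i) := by
    simpa using card_nsmul_le_sum Sᶜ _ 1 fun i _ => le_add_left (hb i).1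
  have hsmall_le : ∑ i ∈ Sᶜ, (c i * l + b i) + #Sᶜ ≤ #Sᶜ * (r * l) := by
    have := sum_le_card_nsmul Sᶜ (fun i => c i * l + b i + 1) (r * l) fun i hi =>
      mul_add_lt_mul hr (hb i).1 (hb i).2 (hc i hi)
    simpa [sum_add_distrib] using this
  have hlarge_ge : #S * (r.choose 2 * l) + #S * r ≤ ∑ i ∈ S, (r.choose 2 * l + r * b i) := by
    have := card_nsmul_le_sum S _ _ fun i _ =>
      Nat.add_le_add_left (Nat.le_mul_of_pos_right r (hb i).1) (r.choose 2 * l)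
    rwa [smul_eq_mul, mul_add] at this
  rcases Nat.lt_or_ge #S 2 with hS | hS
  · by_contra hS1
    have hempty : ∑ i ∈ S, (r.choose 2 * l + r * b i) = 0 := by
      rw [card_eq_zero.1 (show #S = 0 by omega), sum_empty]
    omega
  · exfalso
    have hweight : #Sᶜ * (r * l) ≤ #S * (r.choose 2 * l) :=
      calc #Sᶜ * (r * l) ≤ (r - 1) * (r * l) := Nat.mul_le_mul_right _ (by omega)
        _ = 2 * (r.choose 2 * l) := by rw [← mul_assoc 2, two_mul_choose_two_s11]; ring
        _ ≤ #S * (r.choose 2 * l) := Nat.mul_le_mul_right _ hS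
    have : 0 < #S * r := by positivity
    omega

theorem sum_eq_mul_of_sum_mul_add_eq (hr : 0 < r) {T : Finset ι} (hT : #T = r) {b c : ι → ℕ}
    {b₀ : ℕ} (hb : ∀ i ∈ T, 1 ≤ b i ∧ r * b i ≤ l) (hb₀ : 1 ≤ b₀ ∧ r * b₀ ≤ l)
    (h : ∑ i ∈ T, (c i * l + b i) = r.choose 2 * l + r * b₀) :
    ∑ i ∈ T, b i = r * b₀ := by
  have hpos : r ≤ ∑ i ∈ T, b i := by
    simpa [hT] using card_nsmul_le_sum T b 1 fun i hi => (hb i hi).1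
  have hle : ∑ i ∈ T, b i ≤ l := by
    refine Nat.le_of_mul_le_mul_left ?_ hr
    rw [mul_sum]
    simpa [hT] using sum_le_card_nsmul T (fun i => r * b i) l fun i hi => (hb i hi).2
  rw [sum_add_distrib, ← sum_mul] at h
  exact Nat.eq_of_mul_add_eq_mul_add_s11 (by omega) hle (by nlinarith) hb₀.2 h

theorem eq_of_sum_eq_card_mul {D : Finset ℕ}
    (hD : ∀ f : ℕ → ℕ, (∀ i ≤ r, f i ∈ D) →
      (∑ i ∈ range r, f i) = r * f r → ∀ i ≤ r, f i = f 0)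
    [LinearOrder ι] {T : Finset ι} (hT : #T = r) {g : ι → ℕ} (hg : ∀ i ∈ T, g i ∈ D) {b : ℕ}
    (hb : b ∈ D) (hsum : ∑ i ∈ T, g i = r * b) : ∀ i ∈ T, g i = b := by
  set e := T.orderEmbOfFin hT
  let f : ℕ → ℕ := fun i => if h : i < r then g (e ⟨i, h⟩) else b
  have hfe : ∀ j : Fin r, f j = g (e j) := fun j => dif_pos j.isLt
  have hfr : f r = b := dif_neg (lt_irrefl r)
  have hfD : ∀ i ≤ r, f i ∈ D := fun i _ => by
    by_cases h : i < r
    · simpa [f, h] using hg _ (T.orderEmbOfFin_mem hT _)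
    · simpa [f, h] using hb
  have hfsum : ∑ i ∈ range r, f i = r * f r := by
    rw [← Fin.sum_univ_eq_sum_range, hfr, ← hsum, ← T.map_orderEmbOfFin_univ hT, sum_map]
    exact sum_congr rfl fun j _ => hfe j
  have hconst := hD f hfD hfsum
  intro i hi
  obtain ⟨j, rfl⟩ : i ∈ Set.range e := by rwa [T.range_orderEmbOfFin hT]
  rw [← hfe, hconst j j.isLt.le, ← hconst r le_rfl, hfr]

end

theorem image_eq_transversal {ι : Type*} [Fintype ι] [DecidableEq ι] {N r l b₀ : ℕ}
    (hι : Fintype.card ι = r + 1) {a : ι → ZMod N} (hinj : Function.Injective a) {i₀ : ι}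
    (h₀ : a i₀ = -((r.choose 2 * l + r * b₀ : ℕ) : ZMod N))
    (hsmall : ∀ i ≠ i₀, ∃ c < r, a i = ((c * l + b₀ : ℕ) : ZMod N)) :
    univ.image a = transversal N r l b₀ := by
  have hsub : (univ.erase i₀).image a ⊆ (range r).image fun c => ((c * l + b₀ : ℕ) : ZMod N) := by
    intro x hx
    obtain ⟨i, hi, rfl⟩ := mem_image.1 hx
    obtain ⟨c, hc, hac⟩ := hsmall i (ne_of_mem_erase hi)
    exact mem_image.2 ⟨c, mem_range.2 hc, hac.symm⟩
  have heq := eq_of_subset_of_card_le hsub <| by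
    rw [card_image_of_injective _ hinj, card_erase_of_mem (mem_univ _), card_univ, hι]
    exact card_image_le.trans (card_range r).le
  rw [← insert_erase (mem_univ i₀), image_insert, heq, h₀, transversal, apex_eq_neg, union_comm,
    ← insert_eq]

theorem exists_eq_transversal_of_sum_eq_zero {N r l : ℕ} (hr : 2 ≤ r)
    (hN : (r + 1) * ((r.choose 2 + 1) * l) < N) {D : Finset ℕ} (hD : ∀ b ∈ D, 1 ≤ b ∧ r * b ≤ l)
    (hprop : ∀ f : ℕ → ℕ, (∀ i ≤ r, f i ∈ D) →
      (∑ i ∈ range r, f i) = r * f r → ∀ i ≤ r, f i = f 0)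
    {a : Fin (r + 1) → ZMod N} (hinj : Function.Injective a)
    (ha : ∀ i, a i ∈ D.biUnion (transversal N r l)) (hsum : ∑ i, a i = 0) :
    ∃ b ∈ D, univ.image a = transversal N r l b := by
  choose b hbD hab using fun i => mem_biUnion.1 (ha i)
  have hb i := hD _ (hbD i)
  set S := univ.filter fun i => a i = -((r.choose 2 * l + r * b i : ℕ) : ZMod N)
  have hsmall : ∀ i, ∃ c, i ∈ Sᶜ → c < r ∧ a i = ((c * l + b i : ℕ) : ZMod N) := by
    intro i
    by_cases hi : i ∈ S
    · exact ⟨0, fun h => absurd hi (mem_compl.1 h)⟩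
    · obtain ⟨c, hc, h⟩ := (mem_transversal.1 (hab i)).resolve_right (by simpa [S] using hi)
      exact ⟨c, fun _ => ⟨hc, h⟩⟩
  choose c hc using hsmall
  have hbalance : ∑ i ∈ Sᶜ, (c i * l + b i) = ∑ i ∈ S, (r.choose 2 * l + r * b i) := by
    let u i := if i ∈ S then r.choose 2 * l + r * b i else c i * l + b i
    have hu_S : ∀ i ∈ S, u i = r.choose 2 * l + r * b i := fun i hi => if_pos hi
    have hu_Sc : ∀ i ∈ Sᶜ, u i = c i * l + b i := fun i hi => if_neg (mem_compl.1 hi)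
    have hu : ∀ i, u i ≤ (r.choose 2 + 1) * l := fun i => by
      by_cases hi : i ∈ S
      · rw [hu_S i hi]
        exact choose_two_mul_add_le (hb i).2
      · rw [hu_Sc i (mem_compl.2 hi)]
        exact (mul_add_lt_choose_two_succ_mul hr (hb i).1 (hb i).2 (hc i (mem_compl.2 hi)).1).le
    have := sum_compl_eq_sum_of_sum_eq_zero (by simpa using hN) hu
      (fun i hi => by rw [hu_S i hi]; exact (mem_filter.1 hi).2)
      (fun i hi => by rw [hu_Sc i hi]; exact (hc i hi).2) hsum
    rwa [sum_congr rfl hu_Sc, sum_congr rfl hu_S] at this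
  obtain ⟨i₀, hS⟩ := card_eq_one.1 <|
    card_eq_one_of_sum_compl_eq_sum hr (by simp) hb (fun i hi => (hc i hi).1) hbalance
  have hcardSc : #Sᶜ = r := by rw [card_compl, hS]; simp
  have hconst := eq_of_sum_eq_card_mul hprop hcardSc (fun i _ => hbD i) (hbD i₀) <|
    sum_eq_mul_of_sum_mul_add_eq (by omega) hcardSc (fun i _ => hb i) (hb i₀) <| by
      rw [hbalance, hS, sum_singleton]
  refine ⟨b i₀, hbD i₀, image_eq_transversal (i₀ := i₀) (by simp) hinj ?_ fun i hi => ?_⟩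
  · exact (mem_filter.1 (hS ▸ mem_singleton_self i₀ : i₀ ∈ S)).2
  · have hi' : i ∈ Sᶜ := by simpa [hS] using hi
    exact ⟨c i, (hc i hi').1, by rw [(hc i hi').2, hconst i hi']⟩

theorem statement11_general (N r : ℕ) (hN : 1 ≤ N) (hr : 2 ≤ r) (lam del : ℝ)
    (hlam1 : lam < 1 / (r : ℝ) ^ 3)
    (hdel1 : del < lam / r)
    (d l : ℕ) (hd : d = ⌊del * N⌋₊) (hl : l = ⌊lam * N⌋₊)
    (D : Finset ℕ) (hD : D ⊆ Finset.Icc 1 d)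
    (hprop : ∀ f : ℕ → ℕ, (∀ i ≤ r, f i ∈ D) →
      (∑ i ∈ Finset.range r, f i) = r * f r → ∀ i ≤ r, f i = f 0)
    (Ab : ℕ → Finset (ZMod N))
    (hAb : ∀ bb : ℕ, Ab bb =
      ((Finset.range r).image fun i => ((i * l + bb : ℕ) : ZMod N)) ∪
        {(N : ZMod N) - ((r.choose 2 * l : ℕ) : ZMod N) - ((r * bb : ℕ) : ZMod N)})
    (A : Finset (ZMod N)) (hA : A = D.biUnion Ab)
    (a : Fin (r + 1) → ZMod N) (hinj : Function.Injective a) (ha : ∀ i, a i ∈ A) :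
    (∑ i, a i) = 0 ↔ ∃ bb ∈ D, Finset.univ.image a = Ab bb := by
  have hrd : r * d ≤ l := by
    rw [hd, hl]
    refine Nat.mul_floor_le_floor_s11 ?_
    calc (r : ℝ) * (del * N) = del * r * N := by ring
      _ ≤ lam * N := by gcongr; exact ((lt_div_iff₀ (by positivity)).1 hdel1).le
  have hl3 : r ^ 3 * l < N := by
    rw [hl]
    refine Nat.mul_floor_mul_lt hN ?_
    push_cast
    exact (lt_div_iff₀' (by positivity)).1 hlam1
  have hbig : (r + 1) * ((r.choose 2 + 1) * l) < N :=
    calc (r + 1) * ((r.choose 2 + 1) * l) = (r + 1) * (r.choose 2 + 1) * l := by ring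
      _ ≤ r ^ 3 * l := Nat.mul_le_mul_right l (succ_mul_choose_two_succ_le hr)
      _ < N := hl3
  have hD' : ∀ b ∈ D, 1 ≤ b ∧ r * b ≤ l := fun b hb =>
    ⟨(mem_Icc.1 (hD hb)).1, (Nat.mul_le_mul_left r (mem_Icc.1 (hD hb)).2).trans hrd⟩
  obtain rfl : Ab = transversal N r l := funext hAb
  subst hA
  refine ⟨exists_eq_transversal_of_sum_eq_zero hr hbig hD' hprop hinj ha, ?_⟩
  rintro ⟨b, hb, him⟩
  calc ∑ i, a i = ∑ x ∈ univ.image a, x :=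
        (sum_image (f := fun x => x) fun x _ y _ h => hinj h).symm
    _ = 0 := him ▸ sum_transversal hr hbig (hD' b hb).1 (hD' b hb).2

/-- Lemma 4 of the paper: with `A = ⋃_{b ∈ D} A_b ⊆ ZMod N`, any `r+1` distinct elements
of `A` sum to `0` in `ZMod N` iff they form one of the transversals `A_b`. -/
theorem statement11 (N r : ℕ) (hN : 1 ≤ N) (hr : 2 ≤ r) (lam del : ℝ)
    (hlam0 : 0 < lam) (hlam1 : lam < 1 / (r : ℝ) ^ 3)
    (hdel0 : 0 < del) (hdel1 : del < lam / r)
    (d l : ℕ) (hd : d = ⌊del * N⌋₊) (hl : l = ⌊lam * N⌋₊)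
    (D : Finset ℕ) (hD : D ⊆ Finset.Icc 1 d)
    (hprop : ∀ f : ℕ → ℕ, (∀ i ≤ r, f i ∈ D) →
      (∑ i ∈ Finset.range r, f i) = r * f r → ∀ i ≤ r, f i = f 0)
    (Ab : ℕ → Finset (ZMod N))
    (hAb : ∀ bb : ℕ, Ab bb =
      ((Finset.range r).image fun i => ((i * l + bb : ℕ) : ZMod N)) ∪
        {(N : ZMod N) - ((r.choose 2 * l : ℕ) : ZMod N) - ((r * bb : ℕ) : ZMod N)})
    (A : Finset (ZMod N)) (hA : A = D.biUnion Ab)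
    (a : Fin (r + 1) → ZMod N) (hinj : Function.Injective a) (ha : ∀ i, a i ∈ A) :
    (∑ i, a i) = 0 ↔ ∃ bb ∈ D, Finset.univ.image a = Ab bb :=
  statement11_general N r hN hr lam del hlam1 hdel1 d l hd hl D hD hprop Ab hAb A hA a hinj ha
end

section
/- Let F = F_q with primitive element γ, N = q − 1, and let β_1, ..., β_{r+1} ∈ Z_N be distinct with Σ_{i=1}^{r+1} β_i ≢ 0 (mod N). Then the (r+1)×(r+1) matrix M over F with M_{ℓ,i} = γ^{ℓ·β_i} for 1 ≤ ℓ ≤ r and M_{r+1,i} = γ^{(r+1)β_i} + (−1)^{r+1} is invertible. -/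
/-!
Split the last row as `(x_i ^ (r+1))_i + (-1)^(r+1) • (1)_i` and expand the determinant linearly in
that row. The first matrix is the transposed Vandermonde matrix of `x` times `diagonal x`, the
second is the transposed Vandermonde matrix with its rows rotated, so `det M = V(x) * (∏ x_i - 1)`.
For `x_i = γ ^ β_i` the points are distinct because `γ` has order `q - 1`, and
`∏ x_i = γ ^ (∑ β_i) ≠ 1` because `∑ β_i ≢ 0`.
-/

open Matrix

theorem Matrix.det_of_pow_succ_add_last {R : Type*} [CommRing R] {n : ℕ}
    (x : Fin (n + 1) → R) (a : R) :
    (Matrix.of fun (ℓ i : Fin (n + 1)) =>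
      if (ℓ : ℕ) < n then x i ^ ((ℓ : ℕ) + 1) else x i ^ (n + 1) + a).det =
      (vandermonde x).det * (∏ i, x i + (-1) ^ n * a) := by
  -- rows `x^1, …, x^n, 1`: the transposed Vandermonde matrix with its rows rotated
  set A := (vandermonde x)ᵀ.submatrix (finRotate (n + 1)) id
  have hA : (Matrix.of fun (ℓ i : Fin (n + 1)) =>
      if (ℓ : ℕ) < n then x i ^ ((ℓ : ℕ) + 1) else x i ^ (n + 1) + a) =
      A.updateRow (Fin.last n) ((fun i => x i ^ (n + 1)) + a • A (Fin.last n)) := by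
    ext ℓ i
    induction ℓ using Fin.lastCases <;> simp [A]
  have hlast : A.updateRow (Fin.last n) (fun i => x i ^ (n + 1)) =
      (vandermonde x)ᵀ * diagonal x := by
    ext ℓ i
    induction ℓ using Fin.lastCases <;> simp [A, pow_succ]
  rw [hA, det_updateRow_add, det_updateRow_smul, updateRow_eq_self, hlast, det_mul,
    det_transpose, det_diagonal, det_permute, sign_finRotate, det_transpose]
  push_cast
  ring

theorem statement14_general (q r : ℕ) (F : Type*) [Field F] [Fintype F]
    (hF : Fintype.card F = q) (γ : F) (hγ : IsPrimitiveRoot γ (q - 1))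
    (β : Fin (r + 1) → ZMod (q - 1)) (hdist : Function.Injective β)
    (hsum : (∑ i, β i) ≠ 0) :
    IsUnit (Matrix.of fun (ℓ i : Fin (r + 1)) =>
      if (ℓ : ℕ) < r then γ ^ (((ℓ : ℕ) + 1) * (β i).val)
      else γ ^ ((r + 1) * (β i).val) + (-1) ^ (r + 1)) := by
  have : NeZero (q - 1) := ⟨by have := Fintype.one_lt_card (α := F); omega⟩
  set x : Fin (r + 1) → F := fun i => γ ^ (β i).val
  have hx : Function.Injective x := fun i j h =>
    hdist (ZMod.val_injective _ (hγ.pow_inj (ZMod.val_lt _) (ZMod.val_lt _) h))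
  have hprod : ∏ i, x i ≠ 1 := by
    rw [Finset.prod_pow_eq_pow_sum, Ne, hγ.pow_eq_one_iff_dvd, ← ZMod.natCast_eq_zero_iff]
    simpa using hsum
  simp_rw [mul_comm _ (ZMod.val _), pow_mul]
  rw [isUnit_iff_isUnit_det, isUnit_iff_ne_zero, det_of_pow_succ_add_last x]
  refine mul_ne_zero (det_vandermonde_ne_zero_iff.mpr hx) ?_
  rwa [← pow_add, Odd.neg_one_pow ⟨r, by ring⟩, ← sub_eq_add_neg, sub_ne_zero]

/-- If `β₁,…,β_{r+1} ∈ Z_{q-1}` are distinct with `∑ βᵢ ≢ 0 (mod q-1)`, then the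
`(r+1)×(r+1)` matrix of the construction is invertible. -/
theorem statement14 (q r : ℕ) (hr : 1 ≤ r) (F : Type*) [Field F] [Fintype F]
    (hF : Fintype.card F = q) (γ : F) (hγ : IsPrimitiveRoot γ (q - 1))
    (β : Fin (r + 1) → ZMod (q - 1)) (hdist : Function.Injective β)
    (hsum : (∑ i, β i) ≠ 0) :
    IsUnit (Matrix.of fun (ℓ i : Fin (r + 1)) =>
      if (ℓ : ℕ) < r then γ ^ (((ℓ : ℕ) + 1) * (β i).val)
      else γ ^ ((r + 1) * (β i).val) + (-1) ^ (r + 1)) :=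
  statement14_general q r F hF γ hγ β hdist hsum
end

section
/- Let G be the (r+1) × n matrix over F_q defined by g_{ℓ,(i,j)} = γ^{ℓ·a_{ij}} for 1 ≤ ℓ ≤ r and g_{r+1,(i,j)} = γ^{(r+1)·a_{ij}} + (−1)^{r+1}, where γ is primitive in F_q, the exponents a_{ij} ∈ Z_{q−1} are distinct, and the index set is partitioned into repair groups R_i = {(i,1), ..., (i,r+1)} whose exponent sets A_i = {a_{i1}, ..., a_{i,r+1}} satisfy: a sum of r+1 distinct exponents is ≡ 0 mod q−1 iff they form some A_i. Then the row span C of G is an (n, r+1) linear code such that for every transversal T (a set meeting each R_i in exactly one index), the punctured code C|_T is MDS. -/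
/-!
Write `x_j = γ ^ a_j` for the exponents `a_j` of the chosen columns. The chosen `(r+1) × (r+1)`
minor is a Vandermonde-type matrix whose last row is perturbed by the constant `(-1)^(r+1)`;
expanding linearly in that row gives the determinant `(∏ x_j - 1) · V(x)`, with `V` the
Vandermonde determinant. `V(x) ≠ 0` because the exponents are distinct, and `∏ x_j ≠ 1` because
`∑ a_j ≢ 0 (mod q-1)`: the columns lie in distinct repair groups, so their exponents are not one of
the sets `A_i`.
-/

open Finset Function Matrix

namespace Matrix

variable {R : Type*} [CommRing R] {n : ℕ}

theorem det_of_pow_succ (x : Fin n → R) :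
    (of fun ℓ j : Fin n => x j ^ ((ℓ : ℕ) + 1)).det = (∏ j, x j) * (vandermonde x).det := by
  rw [← det_transpose (vandermonde x), ← det_mul_row]
  congr 1
  ext ℓ j
  simp [pow_succ']

theorem det_updateRow_last_of_pow_succ (x : Fin (n + 1) → R) :
    ((of fun ℓ j : Fin (n + 1) => x j ^ ((ℓ : ℕ) + 1)).updateRow (Fin.last n) 1).det =
      (-1) ^ n * (vandermonde x).det := by
  have hrot : (of fun ℓ j : Fin (n + 1) => x j ^ ((ℓ : ℕ) + 1)).updateRow (Fin.last n) 1 =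
      (vandermonde x)ᵀ.submatrix (finRotate (n + 1)) id := by
    ext ℓ j
    rcases Fin.eq_castSucc_or_eq_last ℓ with ⟨i, rfl⟩ | rfl <;> simp [vandermonde_apply]
  rw [hrot, det_permute, sign_finRotate, det_transpose]
  simp

theorem det_of_pow_succ_add_neg_one_pow_last (x : Fin (n + 1) → R) :
    (of fun ℓ j : Fin (n + 1) =>
        if (ℓ : ℕ) < n then x j ^ ((ℓ : ℕ) + 1) else x j ^ (n + 1) + (-1) ^ (n + 1)).det =
      (∏ j, x j - 1) * (vandermonde x).det := by
  set A : Matrix (Fin (n + 1)) (Fin (n + 1)) R := of fun ℓ j => x j ^ ((ℓ : ℕ) + 1)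
  have hrow : (of fun ℓ j : Fin (n + 1) =>
        if (ℓ : ℕ) < n then x j ^ ((ℓ : ℕ) + 1) else x j ^ (n + 1) + (-1) ^ (n + 1)) =
      A.updateRow (Fin.last n) (A (Fin.last n) + (-1 : R) ^ (n + 1) • 1) := by
    ext ℓ j
    rcases Fin.eq_castSucc_or_eq_last ℓ with ⟨i, rfl⟩ | rfl <;> simp [A]
  have hsign : (-1 : R) ^ (n + 1) * (-1) ^ n = -1 := by
    rw [← pow_add, show n + 1 + n = 2 * n + 1 by omega, pow_succ, pow_mul]
    simp
  rw [hrow, det_updateRow_add, updateRow_eq_self, det_updateRow_smul, det_of_pow_succ,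
    det_updateRow_last_of_pow_succ]
  linear_combination (vandermonde x).det * hsign

end Matrix

theorem IsPrimitiveRoot.prod_pow_val_eq_one_iff {M ι : Type*} [CommMonoid M] {k : ℕ} [NeZero k]
    {ζ : M} (hζ : IsPrimitiveRoot ζ k) (s : Finset ι) (b : ι → ZMod k) :
    ∏ i ∈ s, ζ ^ (b i).val = 1 ↔ ∑ i ∈ s, b i = 0 := by
  rw [prod_pow_eq_pow_sum, hζ.pow_eq_one_iff_dvd, ← ZMod.natCast_eq_zero_iff, Nat.cast_sum]
  simp only [ZMod.natCast_zmod_val]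

theorem sum_transversal_ne_zero {β : Type*} [AddCommMonoid β] [DecidableEq β] {m k : ℕ}
    (hk : 1 ≤ k) (a : Fin m → Fin (k + 1) → β)
    (hinj : Injective fun p : Fin m × Fin (k + 1) => a p.1 p.2)
    (hzs : ∀ S : Finset β, S.card = k + 1 → (∀ x ∈ S, ∃ i j, x = a i j) →
      ∑ x ∈ S, x = 0 → ∃ i, S = univ.image (a i))
    (τ : Fin m → Fin (k + 1)) (s : Fin (k + 1) → Fin m) (hs : Injective s) :
    ∑ j, a (s j) (τ (s j)) ≠ 0 := by
  set b : Fin (k + 1) → β := fun j => a (s j) (τ (s j))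
  have hgroup : ∀ {i i' j j'}, a i j = a i' j' → i = i' := fun {i i' j j'} h =>
    congrArg Prod.fst (hinj (a₁ := (i, j)) (a₂ := (i', j')) h)
  have hb : Injective b := fun j j' h => hs (hgroup h)
  intro hsum
  obtain ⟨i, hi⟩ := hzs (univ.image b) (by simp [card_image_of_injective _ hb])
    (by simp [b]) (by rwa [sum_image fun j _ j' _ h => hb h])
  have hsi : ∀ j, s j = i := by
    intro j
    obtain ⟨j', -, hj'⟩ := mem_image.mp (hi ▸ mem_image_of_mem b (mem_univ j))
    exact (hgroup hj').symm
  have h01 := hs ((hsi ⟨0, by omega⟩).trans (hsi ⟨1, by omega⟩).symm)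
  simp at h01

/-- MDS property on transversals: for the generator matrix `G` of the construction,
built from distinct exponents `a i j ∈ Z_{q-1}` such that `r+1` distinct exponents sum
to `0` iff they form one of the groups `A_i`, the restriction of `G` to the columns of
any transversal has every `r+1` of its columns linearly independent (so the punctured
code is MDS). -/
theorem statement16 (q r m : ℕ) (hr : 1 ≤ r) (F : Type*) [Field F] [Fintype F]
    (hF : Fintype.card F = q) (γ : F) (hγ : IsPrimitiveRoot γ (q - 1))
    (a : Fin m → Fin (r + 1) → ZMod (q - 1))
    (hinj : Function.Injective fun p : Fin m × Fin (r + 1) => a p.1 p.2)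
    (hzs : ∀ S : Finset (ZMod (q - 1)), S.card = r + 1 →
      (∀ x ∈ S, ∃ i j, x = a i j) →
      ((∑ x ∈ S, x) = 0 ↔ ∃ i, S = Finset.univ.image (a i)))
    (G : Matrix (Fin (r + 1)) (Fin m × Fin (r + 1)) F)
    (hG : ∀ ℓ p, G ℓ p =
      if (ℓ : ℕ) < r then γ ^ (((ℓ : ℕ) + 1) * (a p.1 p.2).val)
      else γ ^ ((r + 1) * (a p.1 p.2).val) + (-1) ^ (r + 1))
    (τ : Fin m → Fin (r + 1))
    (s : Fin (r + 1) → Fin m) (hs : Function.Injective s) :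
    LinearIndependent F fun j : Fin (r + 1) => fun ℓ : Fin (r + 1) => G ℓ (s j, τ (s j)) := by
  have : NeZero (q - 1) := ⟨by have := hF ▸ Fintype.one_lt_card (α := F); omega⟩
  set x : Fin (r + 1) → F := fun j => γ ^ (a (s j) (τ (s j))).val
  have hx : Injective x := fun j j' h => hs <| congrArg Prod.fst <|
    hinj (a₁ := (s j, τ (s j))) (a₂ := (s j', τ (s j'))) <|
      ZMod.val_injective _ (hγ.pow_inj (ZMod.val_lt _) (ZMod.val_lt _) h)
  have hprod : ∏ j, x j ≠ 1 := (hγ.prod_pow_val_eq_one_iff _ _).not.mpr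
    (sum_transversal_ne_zero hr a hinj (fun S hcard hmem => (hzs S hcard hmem).mp) τ s hs)
  have hminor : (of fun ℓ j => G ℓ (s j, τ (s j))) = of fun ℓ j : Fin (r + 1) =>
      if (ℓ : ℕ) < r then x j ^ ((ℓ : ℕ) + 1) else x j ^ (r + 1) + (-1) ^ (r + 1) := by
    ext ℓ j
    simp only [of_apply, hG, x, ← pow_mul, mul_comm]
  refine linearIndependent_cols_of_det_ne_zero (A := of fun ℓ j => G ℓ (s j, τ (s j))) ?_
  rw [hminor, det_of_pow_succ_add_neg_one_pow_last]
  exact mul_ne_zero (sub_ne_zero.mpr hprod) (det_vandermonde_ne_zero_iff.mpr hx)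
end

section
/- With G as above (the matrix of Theorem 2, built from exponent sets satisfying the zero-sum characterization), for every repair group R_i the submatrix G_{R_i} of the r+1 columns indexed by R_i has rank exactly r, and consequently the code C punctured to R_i (i.e., C|_{R_i}) has minimum distance at least 2, i.e., any single erasure within a repair group can be corrected from the remaining r coordinates of that group. -/
/-!
Write `x_j = γ ^ a_{ij}` for the points of a repair group. The first `r` rows of the column at
`x_j` are `x_j, …, x_j ^ r`, so any `r` of the `r + 1` columns are independent (a
Vandermonde determinant times `∏ x_j`). The points are roots of `∏ (X - x_k)`, whose constant
term is `(-1) ^ (r + 1)` because the exponents sum to `0` modulo `q - 1`; hence each column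
satisfies one fixed linear relation, and the columns span a space of dimension at most `r`.
So any `r` of them already span it, which gives both the rank and the repair property.
-/

open Polynomial Module Submodule Set

section LinearAlgebra

variable {K V : Type*} [Field K] [AddCommGroup V] [Module K V] {n : ℕ} {v : Fin (n + 1) → V}

theorem span_range_comp_succAbove_eq_span_range
    (hind : ∀ j : Fin (n + 1), LinearIndependent K (v ∘ j.succAbove))
    (hdim : finrank K (span K (range v)) ≤ n) (j : Fin (n + 1)) :
    span K (range (v ∘ j.succAbove)) = span K (range v) := by
  have := FiniteDimensional.span_of_finite K (finite_range v)
  refine eq_of_le_of_finrank_le (span_mono (range_comp_subset_range _ _)) ?_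
  rw [finrank_span_eq_card (hind j), Fintype.card_fin]
  exact hdim

theorem finrank_span_range_eq_of_linearIndependent_succAbove
    (hind : ∀ j : Fin (n + 1), LinearIndependent K (v ∘ j.succAbove))
    (hdim : finrank K (span K (range v)) ≤ n) :
    finrank K (span K (range v)) = n := by
  rw [← span_range_comp_succAbove_eq_span_range hind hdim 0, finrank_span_eq_card (hind 0),
    Fintype.card_fin]

theorem mem_span_range_comp_succAbove
    (hind : ∀ j : Fin (n + 1), LinearIndependent K (v ∘ j.succAbove))
    (hdim : finrank K (span K (range v)) ≤ n) (j : Fin (n + 1)) :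
    v j ∈ span K (range (v ∘ j.succAbove)) := by
  rw [span_range_comp_succAbove_eq_span_range hind hdim j]
  exact subset_span (mem_range_self j)

end LinearAlgebra

theorem Polynomial.Monic.pow_add_coeff_zero_eq_of_isRoot {R : Type*} [CommRing R] {P : R[X]}
    (hP : P.Monic) {n : ℕ} (hdeg : P.natDegree = n + 1) {x : R} (hx : P.IsRoot x) :
    x ^ (n + 1) + P.coeff 0 = -∑ ℓ : Fin n, P.coeff (ℓ + 1) * x ^ ((ℓ : ℕ) + 1) := by
  have hsum := (eval_eq_sum_range' (n := n + 2) (by omega) x).symm.trans hx.eq_zero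
  rw [Finset.sum_range_succ, Finset.sum_range_succ', ← hdeg, hP.coeff_natDegree, hdeg,
    ← Fin.sum_univ_eq_sum_range (fun ℓ => P.coeff (ℓ + 1) * x ^ (ℓ + 1))] at hsum
  linear_combination hsum

theorem coeff_zero_prod_X_sub_C {R : Type*} [CommRing R] {n : ℕ} (x : Fin n → R) :
    (∏ k, (X - C (x k))).coeff 0 = (-1) ^ n * ∏ k, x k := by
  simp [coeff_zero_eq_eval_zero, eval_prod, Finset.prod_neg]

section RepairColumn

variable {F : Type*} [Field F] {n : ℕ}

/-- The column of `G` at the point `x = γ ^ a_{ij}`. -/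
def repairColumn (n : ℕ) (x : F) : Fin (n + 1) → F := fun ℓ =>
  if (ℓ : ℕ) < n then x ^ ((ℓ : ℕ) + 1) else x ^ (n + 1) + (-1) ^ (n + 1)

@[simp]
theorem repairColumn_castSucc (x : F) (ℓ : Fin n) :
    repairColumn n x ℓ.castSucc = x ^ ((ℓ : ℕ) + 1) := by
  simp [repairColumn]

@[simp]
theorem repairColumn_last (x : F) :
    repairColumn n x (Fin.last n) = x ^ (n + 1) + (-1) ^ (n + 1) := by
  simp [repairColumn]

theorem linearIndependent_repairColumn {y : Fin n → F} (hy : Function.Injective y)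
    (hy0 : ∀ k, y k ≠ 0) : LinearIndependent F fun k => repairColumn n (y k) := by
  classical
  set W : Matrix (Fin n) (Fin n) F := Matrix.of fun k ℓ => y k ^ ((ℓ : ℕ) + 1)
  have hW : W = Matrix.diagonal y * Matrix.vandermonde y := by
    ext k ℓ
    simp [W, Matrix.vandermonde, pow_succ']
  have hdet : IsUnit W.det := by
    rw [isUnit_iff_ne_zero, hW, Matrix.det_mul, Matrix.det_diagonal, Matrix.det_vandermonde]
    exact mul_ne_zero (Finset.prod_ne_zero_iff.2 fun k _ => hy0 k) <|
      Finset.prod_ne_zero_iff.2 fun k _ => Finset.prod_ne_zero_iff.2 fun l hl =>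
        sub_ne_zero.2 fun h => (Finset.mem_Ioi.1 hl).ne' (hy h)
  have hrows : LinearIndependent F W.row :=
    Matrix.linearIndependent_rows_iff_isUnit.2 ((Matrix.isUnit_iff_isUnit_det W).2 hdet)
  refine LinearIndependent.of_comp (LinearMap.funLeft F F Fin.castSucc) ?_
  convert hrows using 1
  ext k ℓ
  simp [W, LinearMap.funLeft]

/-- The coefficients of `∏ (X - x k)` give a nonzero functional vanishing on every column,
because its constant term is `(-1) ^ (n + 1) * ∏ x k = (-1) ^ (n + 1)`. -/
theorem finrank_span_range_repairColumn_le {x : Fin (n + 1) → F} (hprod : ∏ k, x k = 1) :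
    finrank F (span F (range fun k => repairColumn n (x k))) ≤ n := by
  set P : F[X] := ∏ k, (X - C (x k))
  have hP : P.Monic := monic_prod_of_monic _ _ fun k _ => monic_X_sub_C (x k)
  have hdeg : P.natDegree = n + 1 := by
    simp [P, natDegree_prod _ _ fun k _ => X_sub_C_ne_zero (x k)]
  set φ : (Fin (n + 1) → F) →ₗ[F] F :=
    LinearMap.proj (Fin.last n) + ∑ ℓ : Fin n, P.coeff (ℓ + 1) • LinearMap.proj ℓ.castSucc
  have hφ : ∀ w, φ w = w (Fin.last n) + ∑ ℓ : Fin n, P.coeff (ℓ + 1) * w ℓ.castSucc := by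
    simp [φ, LinearMap.sum_apply]
  have hle : span F (range fun k => repairColumn n (x k)) ≤ LinearMap.ker φ := by
    rw [span_le]
    rintro _ ⟨k, rfl⟩
    have hroot : P.IsRoot (x k) := by
      simp only [P, IsRoot, eval_prod, eval_sub, eval_X, eval_C]
      exact Finset.prod_eq_zero (Finset.mem_univ k) (sub_self _)
    have := hP.pow_add_coeff_zero_eq_of_isRoot hdeg hroot
    rw [coeff_zero_prod_X_sub_C, hprod, mul_one] at this
    simp only [SetLike.mem_coe, LinearMap.mem_ker, hφ, repairColumn_castSucc, repairColumn_last,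
      this, neg_add_cancel]
  have hφ0 : LinearMap.ker φ ≠ ⊤ := by
    rw [Ne, LinearMap.ker_eq_top]
    intro h
    simpa [hφ] using LinearMap.congr_fun h (Pi.single (Fin.last n) 1)
  have := Submodule.finrank_lt hφ0
  rw [Module.finrank_fin_fun] at this
  exact (Submodule.finrank_mono hle).trans (Nat.le_of_lt_succ this)

theorem linearIndependent_repairColumn_succAbove {x : Fin (n + 1) → F}
    (hx : Function.Injective x) (hx0 : ∀ k, x k ≠ 0) (j : Fin (n + 1)) :
    LinearIndependent F ((fun k => repairColumn n (x k)) ∘ j.succAbove) :=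
  linearIndependent_repairColumn (hx.comp Fin.succAbove_right_injective) fun _ => hx0 _

end RepairColumn

theorem IsPrimitiveRoot.prod_pow_val_eq_one {M ι : Type*} [CommMonoid M] {N : ℕ} [NeZero N]
    {γ : M} (hγ : IsPrimitiveRoot γ N) (s : Finset ι) (e : ι → ZMod N)
    (he : ∑ k ∈ s, e k = 0) :
    ∏ k ∈ s, γ ^ (e k).val = 1 := by
  rw [Finset.prod_pow_eq_pow_sum, hγ.pow_eq_one_iff_dvd, ← ZMod.natCast_eq_zero_iff]
  push_cast [ZMod.natCast_val, ZMod.cast_id]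
  exact he

theorem statement17_general (q r m : ℕ) (F : Type*) [Field F] [Fintype F]
    (hF : Fintype.card F = q) (γ : F) (hγ : IsPrimitiveRoot γ (q - 1))
    (a : Fin m → Fin (r + 1) → ZMod (q - 1))
    (hinj : Function.Injective fun p : Fin m × Fin (r + 1) => a p.1 p.2)
    (hgroup : ∀ i : Fin m, (∑ j, a i j) = 0)
    (G : Matrix (Fin (r + 1)) (Fin m × Fin (r + 1)) F)
    (hG : ∀ ℓ p, G ℓ p =
      if (ℓ : ℕ) < r then γ ^ (((ℓ : ℕ) + 1) * (a p.1 p.2).val)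
      else γ ^ ((r + 1) * (a p.1 p.2).val) + (-1) ^ (r + 1))
    (i : Fin m) :
    (G.submatrix id fun j : Fin (r + 1) => ((i, j) : Fin m × Fin (r + 1))).rank = r ∧
      ∀ j : Fin (r + 1), (fun ℓ => G ℓ (i, j)) ∈
        Submodule.span F {v : Fin (r + 1) → F | ∃ j' : Fin (r + 1), j' ≠ j ∧
          v = fun ℓ => G ℓ (i, j')} := by
  have hq : q - 1 ≠ 0 := by
    have := hF ▸ Fintype.one_lt_card (α := F)
    omega
  have : NeZero (q - 1) := ⟨hq⟩
  set x : Fin (r + 1) → F := fun j => γ ^ (a i j).val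
  have hx : Function.Injective x := fun j j' h =>
    (Prod.ext_iff.1 <| @hinj (i, j) (i, j') <| ZMod.val_injective _ <|
      hγ.pow_inj (ZMod.val_lt _) (ZMod.val_lt _) h).2
  have hx0 : ∀ j, x j ≠ 0 := fun j => pow_ne_zero _ (hγ.ne_zero hq)
  have hcol : ∀ j, (fun ℓ => G ℓ (i, j)) = repairColumn r (x j) := fun j => by
    ext ℓ
    simp only [hG, repairColumn, x, pow_mul']
  have hind := linearIndependent_repairColumn_succAbove hx hx0
  have hdim := finrank_span_range_repairColumn_le (hγ.prod_pow_val_eq_one _ _ (hgroup i))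
  refine ⟨?_, fun j => ?_⟩
  · have hcols : (G.submatrix id fun j => (i, j)).col = fun k => repairColumn r (x k) :=
      funext hcol
    rw [Matrix.rank_eq_finrank_span_cols, hcols]
    exact finrank_span_range_eq_of_linearIndependent_succAbove hind hdim
  · rw [hcol]
    refine span_mono ?_ (mem_span_range_comp_succAbove hind hdim j)
    rintro _ ⟨k, rfl⟩
    exact ⟨j.succAbove k, Fin.succAbove_ne j k, (hcol _).symm⟩

/-- Locality property: for the generator matrix `G` of the construction, whose exponents
are distinct and sum to `0 mod q-1` within each repair group, the submatrix of columns of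
any repair group `R_i` has rank exactly `r`, and each column of the group lies in the
span of the other `r` columns (so a single erasure in a group can be corrected). -/
theorem statement17 (q r m : ℕ) (hr : 1 ≤ r) (F : Type*) [Field F] [Fintype F]
    (hF : Fintype.card F = q) (γ : F) (hγ : IsPrimitiveRoot γ (q - 1))
    (a : Fin m → Fin (r + 1) → ZMod (q - 1))
    (hinj : Function.Injective fun p : Fin m × Fin (r + 1) => a p.1 p.2)
    (hgroup : ∀ i : Fin m, (∑ j, a i j) = 0)
    (G : Matrix (Fin (r + 1)) (Fin m × Fin (r + 1)) F)
    (hG : ∀ ℓ p, G ℓ p =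
      if (ℓ : ℕ) < r then γ ^ (((ℓ : ℕ) + 1) * (a p.1 p.2).val)
      else γ ^ ((r + 1) * (a p.1 p.2).val) + (-1) ^ (r + 1))
    (i : Fin m) :
    (G.submatrix id fun j : Fin (r + 1) => ((i, j) : Fin m × Fin (r + 1))).rank = r ∧
      ∀ j : Fin (r + 1), (fun ℓ => G ℓ (i, j)) ∈
        Submodule.span F {v : Fin (r + 1) → F | ∃ j' : Fin (r + 1), j' ≠ j ∧
          v = fun ℓ => G ℓ (i, j')} :=
  statement17_general q r m F hF γ hγ a hinj hgroup G hG i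
end
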